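/- arXiv:2604.20408 — 6 statements merged into one kernel-verified Lean document; each statement's English description precedes it below -/
import Mathlib

section
/- Let 1 ≤ p < ∞, f ∈ L^p[0,1], and λ ∈ ℂ with Re λ > -1/p'. Then for almost every s ∈ (0,1), (1/s^{λ+1}) ∫_0^s u^λ f(u) du = ∫_0^∞ e^{-λt} (T(t)f)(s) dt, and the right-hand Bochner integral converges in L^p[0,1]. -/
open MeasureTheory Set
open scoped ENNReal

/-!
The substitution `u = s e^{-t}` turns `s^{-(λ+1)} ∫_0^s u^λ f(u) du` into
`∫_0^∞ e^{-λt} e^{-t} f(e^{-t} s) dt` for every `s > 0`. For the convergence, rescaling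
Lebesgue measure gives `‖T(t)f‖_p = e^{-(1-1/p)t} ‖f‖_{L^p(0,e^{-t})} ≤ e^{-(1-1/p)t} ‖f‖_p`,
so `e^{-Re λ t} ‖T(t)f‖_p` is dominated by `e^{-(Re λ + 1/p')t}`, integrable on `(0,∞)`.
-/

noncomputable def expDilation (t : ℝ) (f : ℝ → ℂ) (s : ℝ) : ℂ :=
  (Real.exp (-t) : ℂ) * f (Real.exp (-t) * s)

lemma map_const_mul_volume_restrict_Ioc {c : ℝ} (hc : 0 < c) (a : ℝ) :
    Measure.map (c * ·) (volume.restrict (Ioc 0 a))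
      = (ENNReal.ofReal c)⁻¹ • volume.restrict (Ioc 0 (c * a)) := by
  have hpre : (c * ·) ⁻¹' Ioc 0 (c * a) = Ioc 0 a := by
    simp [preimage_const_mul_Ioc₀ _ _ hc, hc.ne']
  rw [← hpre, ← Measure.restrict_map (measurable_const_mul c) measurableSet_Ioc,
    Real.map_volume_mul_left hc.ne', Measure.restrict_smul, abs_of_pos (inv_pos.2 hc),
    ENNReal.ofReal_inv_of_pos hc]

lemma eLpNorm_comp_const_mul_restrict_Ioc {E : Type*} [NormedAddCommGroup E] {c : ℝ}
    (hc : 0 < c) (a : ℝ) {f : ℝ → E} (hf : AEStronglyMeasurable f (volume.restrict (Ioc 0 (c * a))))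
    (p : ℝ≥0∞) :
    eLpNorm (fun s => f (c * s)) p (volume.restrict (Ioc 0 a))
      = ENNReal.ofReal (c⁻¹ ^ (1 / p.toReal))
          * eLpNorm f p (volume.restrict (Ioc 0 (c * a))) := by
  have hmp : MeasurePreserving (c * ·) (volume.restrict (Ioc 0 a))
      ((ENNReal.ofReal c)⁻¹ • volume.restrict (Ioc 0 (c * a))) :=
    ⟨measurable_const_mul c, map_const_mul_volume_restrict_Ioc hc a⟩
  rw [← Function.comp_def,
    eLpNorm_comp_measurePreserving (hf.mono_ac Measure.smul_absolutelyContinuous) hmp,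
    eLpNorm_smul_measure_of_ne_zero (by simp), ← ENNReal.ofReal_inv_of_pos hc,
    ENNReal.ofReal_rpow_of_pos (inv_pos.2 hc), ENNReal.toReal_div, ENNReal.toReal_one, smul_eq_mul]

lemma eLpNorm_expDilation {f : ℝ → ℂ} {t : ℝ}
    (hf : AEStronglyMeasurable f (volume.restrict (Ioc 0 (Real.exp (-t))))) (p : ℝ≥0∞) :
    eLpNorm (expDilation t f) p (volume.restrict (Ioc 0 1))
      = ENNReal.ofReal (Real.exp (-((1 - 1 / p.toReal) * t)))
          * eLpNorm f p (volume.restrict (Ioc 0 (Real.exp (-t)))) := by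
  rw [← mul_one (Real.exp (-t))] at hf
  have hsmul : expDilation t f = ((Real.exp (-t) : ℝ) : ℂ) • fun s => f (Real.exp (-t) * s) :=
    rfl
  rw [hsmul, eLpNorm_const_smul, eLpNorm_comp_const_mul_restrict_Ioc (Real.exp_pos _) 1 hf,
    mul_one, ← mul_assoc, ← ofReal_norm, Complex.norm_real,
    Real.norm_of_nonneg (Real.exp_pos _).le, ← ENNReal.ofReal_mul (Real.exp_pos _).le,
    ← Real.exp_neg, ← Real.exp_mul, ← Real.exp_add]
  congr 3
  ring

lemma integrableOn_exp_mul_eLpNorm_expDilation {p : ℝ≥0∞} {f : ℝ → ℂ}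
    (hf : MemLp f p (volume.restrict (Ioc 0 1))) {a : ℝ} (ha : -(1 - 1 / p.toReal) < a) :
    IntegrableOn (fun t => Real.exp (-(a * t)) *
      (eLpNorm (expDilation t f) p (volume.restrict (Ioc 0 1))).toReal) (Ioi 0) := by
  set b := a + (1 - 1 / p.toReal)
  have hb : 0 < b := by linarith
  -- `F` is antitone, hence measurable; this gives the measurability of the integrand.
  set F : ℝ → ℝ≥0∞ := fun t => eLpNorm f p (volume.restrict (Ioc 0 (Real.exp (-t))))
  have hF : Antitone F := fun t₁ t₂ h => eLpNorm_mono_measure f <|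
    Measure.restrict_mono (Ioc_subset_Ioc le_rfl (Real.exp_le_exp.2 (neg_le_neg h))) le_rfl
  have hrestrict : ∀ t ∈ Ioi (0 : ℝ),
      volume.restrict (Ioc 0 (Real.exp (-t))) ≤ volume.restrict (Ioc (0 : ℝ) 1) := fun t ht =>
    Measure.restrict_mono (Ioc_subset_Ioc le_rfl (Real.exp_le_one_iff.2 (by simpa using ht.le)))
      le_rfl
  have heq : EqOn (fun t => Real.exp (-b * t) * (F t).toReal) (fun t => Real.exp (-(a * t)) *
      (eLpNorm (expDilation t f) p (volume.restrict (Ioc 0 1))).toReal) (Ioi 0) := by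
    intro t ht
    dsimp only
    rw [eLpNorm_expDilation (hf.1.mono_measure (hrestrict t ht)), ENNReal.toReal_mul,
      ENNReal.toReal_ofReal (Real.exp_pos _).le, ← mul_assoc, ← Real.exp_add]
    simp only [F, b]
    ring_nf
  refine IntegrableOn.congr_fun ?_ heq measurableSet_Ioi
  refine Integrable.mono' ((exp_neg_integrableOn_Ioi 0 hb).const_mul
    (eLpNorm f p (volume.restrict (Ioc 0 1))).toReal) ?_ ?_
  · exact ((by fun_prop : Measurable fun t => Real.exp (-b * t)).mul
      hF.measurable.ennreal_toReal).aestronglyMeasurable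
  · filter_upwards [ae_restrict_mem measurableSet_Ioi] with t ht
    rw [Real.norm_of_nonneg (by positivity), mul_comm]
    exact mul_le_mul_of_nonneg_right
      (ENNReal.toReal_mono hf.2.ne (eLpNorm_mono_measure f (hrestrict t ht)))
      (Real.exp_pos _).le

lemma integral_Ioo_eq_integral_Ioi_mul_exp_neg {E : Type*} [NormedAddCommGroup E]
    [NormedSpace ℝ E] (g : ℝ → E) {s : ℝ} (hs : 0 < s) :
    ∫ u in Ioo 0 s, g u = ∫ t in Ioi 0, (s * Real.exp (-t)) • g (s * Real.exp (-t)) := by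
  have himage : (fun t => s * Real.exp (-t)) '' Ioi 0 = Ioo 0 s := by
    rw [show (fun t => s * Real.exp (-t)) = (s * ·) ∘ Real.exp ∘ Neg.neg from rfl, image_comp,
      image_comp, image_neg_Ioi, neg_zero, Real.image_exp_Iio, Real.exp_zero,
      image_mul_left_Ioo hs, mul_zero, mul_one]
  have hderiv : ∀ t ∈ Ioi (0 : ℝ), HasDerivWithinAt (fun t => s * Real.exp (-t))
      (s * (Real.exp (-t) * -1)) (Ioi 0) t := fun t _ =>
    (((Real.hasDerivAt_exp (-t)).comp t (hasDerivAt_neg t)).const_mul s).hasDerivWithinAt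
  have hinj : InjOn (fun t => s * Real.exp (-t)) (Ioi 0) :=
    ((mul_right_injective₀ hs.ne').comp (Real.exp_injective.comp neg_injective)).injOn
  rw [← himage, integral_image_eq_integral_abs_deriv_smul measurableSet_Ioi hderiv hinj]
  refine setIntegral_congr_fun measurableSet_Ioi fun t _ => ?_
  rw [mul_neg_one, mul_neg, abs_neg, abs_of_pos (by positivity)]

lemma ofReal_exp_cpow (x : ℝ) (z : ℂ) : ((Real.exp x : ℝ) : ℂ) ^ z = Complex.exp (x * z) := by
  rw [Complex.cpow_def_of_ne_zero (by exact_mod_cast (Real.exp_pos x).ne'),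
    ← Complex.ofReal_log (Real.exp_pos x).le, Real.log_exp]

lemma cpow_neg_mul_integral_Ioc_eq_integral_expDilation (f : ℝ → ℂ) (lam : ℂ) {s : ℝ}
    (hs : 0 < s) :
    (s : ℂ) ^ (-(lam + 1)) * ∫ u in Ioc 0 s, (u : ℂ) ^ lam * f u =
      ∫ t in Ioi (0 : ℝ), Complex.exp (-(lam * t)) * expDilation t f s := by
  have hsC : (s : ℂ) ≠ 0 := Complex.ofReal_ne_zero.2 hs.ne'
  have hterm : ∀ t : ℝ, (s * Real.exp (-t)) • (((s * Real.exp (-t) : ℝ) : ℂ) ^ lam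
      * f (s * Real.exp (-t)))
        = (s : ℂ) ^ (lam + 1) * (Complex.exp (-(lam * t)) * expDilation t f s) := by
    intro t
    rw [Complex.ofReal_mul, Complex.mul_cpow_ofReal_nonneg hs.le (Real.exp_pos _).le,
      ofReal_exp_cpow, Complex.cpow_add _ _ hsC, Complex.cpow_one, Complex.real_smul, expDilation]
    push_cast
    ring_nf
  rw [integral_Ioc_eq_integral_Ioo, integral_Ioo_eq_integral_Ioi_mul_exp_neg _ hs]
  simp_rw [hterm]
  rw [integral_const_mul, ← mul_assoc, Complex.cpow_neg,
    inv_mul_cancel₀ (by simp [Complex.cpow_eq_zero_iff, hsC]), one_mul]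

theorem stmt5_general (p : ℝ≥0∞) (f : ℝ → ℂ)
    (hf : MemLp f p (volume.restrict (Ioc (0:ℝ) 1))) (lam : ℂ)
    (hl : -(1 - 1 / p.toReal) < lam.re) :
    (IntegrableOn (fun t : ℝ => Real.exp (-(lam.re * t)) *
        (eLpNorm (fun s => (Real.exp (-t) : ℂ) * f (Real.exp (-t) * s)) p
            (volume.restrict (Ioc (0:ℝ) 1))).toReal) (Ioi 0)) ∧
    ∀ᵐ (s : ℝ) ∂(volume.restrict (Ioc (0:ℝ) 1)),
      (s : ℂ) ^ (-(lam + 1)) * ∫ u in Ioc (0:ℝ) s, (u : ℂ) ^ lam * f u =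
        ∫ t in Ioi (0:ℝ),
          Complex.exp (-(lam * t)) * ((Real.exp (-t) : ℂ) * f (Real.exp (-t) * s)) := by
  refine ⟨integrableOn_exp_mul_eLpNorm_expDilation hf hl, ?_⟩
  filter_upwards [ae_restrict_mem measurableSet_Ioc] with s hs
  exact cpow_neg_mul_integral_Ioc_eq_integral_expDilation f lam hs.1

/-- For `1 ≤ p < ∞`, `f ∈ L^p[0,1]` and `Re λ > -1/p'`, almost everywhere on `(0,1)`
`(Λ_0^λ f)(s) = s^{-(λ+1)} ∫_0^s u^λ f(u) du = ∫_0^∞ e^{-λt} (T(t)f)(s) dt`, and the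
right-hand Bochner integral converges in `L^p[0,1]` (the `L^p`-norm of the integrand
is integrable on `(0,∞)`). -/
theorem stmt5 (p : ℝ≥0∞) (hp : 1 ≤ p) (hp' : p ≠ ∞) (f : ℝ → ℂ)
    (hf : MemLp f p (volume.restrict (Ioc (0:ℝ) 1))) (lam : ℂ)
    (hl : -(1 - 1 / p.toReal) < lam.re) :
    (IntegrableOn (fun t : ℝ => Real.exp (-(lam.re * t)) *
        (eLpNorm (fun s => (Real.exp (-t) : ℂ) * f (Real.exp (-t) * s)) p
            (volume.restrict (Ioc (0:ℝ) 1))).toReal) (Ioi 0)) ∧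
    ∀ᵐ (s : ℝ) ∂(volume.restrict (Ioc (0:ℝ) 1)),
      (s : ℂ) ^ (-(lam + 1)) * ∫ u in Ioc (0:ℝ) s, (u : ℂ) ^ lam * f u =
        ∫ t in Ioi (0:ℝ),
          Complex.exp (-(lam * t)) * ((Real.exp (-t) : ℂ) * f (Real.exp (-t) * s)) :=
  stmt5_general p f hf lam hl
end

section
/- Let 1 ≤ p < ∞, f ∈ L^p[0,1], and λ ∈ ℂ with Re λ > -1/p. Then for almost every s ∈ (0,1), s^λ ∫_s^1 f(u)/u^{λ+1} du = ∫_0^∞ e^{-λt} (S(t)f)(s) dt, where S(t)f(s) = χ_{[0,e^{-t})}(s) f(e^t s). -/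
/-!
The substitution `u = s e^t` maps `(0, -log s)` onto `(s, 1)` with `du = u dt`, and turns
`s^λ u^{-(λ+1)} u` into `e^{-λt}`; on the semigroup side the cut-off `χ_{[0,e^{-t})}(s)`
restricts the `t`-integral to the same interval `t < -log s`.
-/

open MeasureTheory Set
open scoped ENNReal

section

open Real

theorem integral_Ioo_comp_mul_exp {E : Type*} [NormedAddCommGroup E] [NormedSpace ℝ E]
    (g : ℝ → E) {s : ℝ} (hs : 0 < s) (L : ℝ) :
    ∫ t in Ioo 0 L, (s * exp t) • g (s * exp t) = ∫ u in Ioo s (s * exp L), g u := by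
  have himage : (fun t ↦ s * exp t) '' Ioo 0 L = Ioo s (s * exp L) := by
    rw [← image_image (s * ·) exp, image_exp_Ioo, exp_zero, image_mul_left_Ioo hs, mul_one]
  rw [← himage, integral_image_eq_integral_abs_deriv_smul measurableSet_Ioo
    (fun t _ ↦ ((hasDerivAt_exp t).const_mul s).hasDerivWithinAt)
    (fun a _ b _ h ↦ exp_injective (mul_left_cancel₀ hs.ne' h))]
  refine setIntegral_congr_fun measurableSet_Ioo fun t _ ↦ ?_
  rw [abs_of_pos (by positivity)]

theorem mem_Ico_exp_neg_iff {s : ℝ} (hs : 0 < s) (t : ℝ) :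
    s ∈ Ico 0 (exp (-t)) ↔ t < -log s := by
  rw [mem_Ico, ← log_lt_iff_lt_exp hs, lt_neg]
  exact and_iff_right hs.le

theorem ofReal_mul_exp_cpow {s : ℝ} (hs : 0 < s) (t : ℝ) (w : ℂ) :
    ((s * exp t : ℝ) : ℂ) ^ w = (s : ℂ) ^ w * Complex.exp (t * w) := by
  have hst : 0 < s * exp t := by positivity
  rw [Complex.cpow_def_of_ne_zero (by exact_mod_cast hst.ne'),
    Complex.cpow_def_of_ne_zero (by exact_mod_cast hs.ne'), ← Complex.ofReal_log hst.le,
    ← Complex.ofReal_log hs.le, log_mul hs.ne' (exp_pos t).ne', log_exp,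
    Complex.ofReal_add, add_mul, Complex.exp_add]

theorem cpow_mul_smul_div_cpow_add_one {s : ℝ} (hs : 0 < s) (t : ℝ) (lam z : ℂ) :
    (s : ℂ) ^ lam * ((s * exp t) • (z / ((s * exp t : ℝ) : ℂ) ^ (lam + 1))) =
      Complex.exp (-(lam * t)) * z := by
  have hst : ((s * exp t : ℝ) : ℂ) ≠ 0 := by
    exact_mod_cast (by positivity : 0 < s * exp t).ne'
  have hslam : (s : ℂ) ^ lam ≠ 0 := by simp [Complex.cpow_eq_zero_iff, hs.ne']
  rw [Complex.real_smul, Complex.cpow_add _ _ hst, Complex.cpow_one, ofReal_mul_exp_cpow hs,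
    Complex.exp_neg, mul_comm lam]
  field_simp

end

theorem stmt6_general (f : ℝ → ℂ) (lam : ℂ) :
    ∀ᵐ (s : ℝ) ∂(volume.restrict (Ioc (0:ℝ) 1)),
      (s : ℂ) ^ lam * ∫ u in Ioc s 1, f u / (u : ℂ) ^ (lam + 1) =
        ∫ t in Ioi (0:ℝ),
          Complex.exp (-(lam * t)) *
            (if s ∈ Ico (0:ℝ) (Real.exp (-t)) then f (Real.exp t * s) else 0) := by
  filter_upwards [ae_restrict_mem measurableSet_Ioc] with s hs
  replace hs : 0 < s := hs.1
  have hchange := integral_Ioo_comp_mul_exp (fun u ↦ f u / (u : ℂ) ^ (lam + 1)) hs (-Real.log s)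
  rw [Real.exp_neg, Real.exp_log hs, mul_inv_cancel₀ hs.ne'] at hchange
  have hcutoff : (fun t : ℝ ↦ Complex.exp (-(lam * t)) *
      (if s ∈ Ico (0:ℝ) (Real.exp (-t)) then f (Real.exp t * s) else 0)) =
      (Iio (-Real.log s)).indicator fun t ↦ Complex.exp (-(lam * t)) * f (s * Real.exp t) := by
    ext t
    simp only [mem_Ico_exp_neg_iff hs, indicator, mem_Iio, mul_comm (Real.exp t), mul_ite,
      mul_zero]
  rw [hcutoff, setIntegral_indicator measurableSet_Iio, Ioi_inter_Iio,
    integral_Ioc_eq_integral_Ioo, ← hchange, ← integral_const_mul]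
  exact setIntegral_congr_fun measurableSet_Ioo fun t _ ↦
    cpow_mul_smul_div_cpow_add_one hs t lam _

/-- For `1 ≤ p < ∞`, `f ∈ L^p[0,1]` and `Re λ > -1/p`, almost everywhere on `(0,1)`
`(Λ_1^λ f)(s) = s^λ ∫_s^1 f(u)/u^{λ+1} du = ∫_0^∞ e^{-λ t} (S(t)f)(s) dt`, where
`S(t)f(s) = χ_{[0,e^{-t})}(s) f(e^t s)`. -/
theorem stmt6 (p : ℝ≥0∞) (hp : 1 ≤ p) (hp' : p ≠ ∞) (f : ℝ → ℂ)
    (hf : MemLp f p (volume.restrict (Ioc (0:ℝ) 1))) (lam : ℂ)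
    (hl : -(1 / p.toReal) < lam.re) :
    ∀ᵐ (s : ℝ) ∂(volume.restrict (Ioc (0:ℝ) 1)),
      (s : ℂ) ^ lam * ∫ u in Ioc s 1, f u / (u : ℂ) ^ (lam + 1) =
        ∫ t in Ioi (0:ℝ),
          Complex.exp (-(lam * t)) *
            (if s ∈ Ico (0:ℝ) (Real.exp (-t)) then f (Real.exp t * s) else 0) :=
  stmt6_general f lam
end

section
/- Let 1 ≤ p < ∞ and λ ∈ ℂ with Re λ < -1/p. If f ∈ L^p[0,1] satisfies ∫_0^1 f(u)/u^{λ+1} du = 0, then the function h(s) = -s^λ ∫_0^s f(u)/u^{λ+1} du belongs to L^p[0,1] and satisfies ‖h‖_p ≤ ∫_0^∞ e^{(Re λ + 1/p)t} dt · ‖f‖_p = ‖f‖_p / (-Re λ - 1/p). -/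
/-!
Put `δ = -Re λ - 1/p > 0`. Hölder's inequality with exponents `1/p` and `1 - 1/p`, applied to the
weight `u^(-Re λ - 1) = (u^δ)^(1/p) (u^(δ-1))^(1-1/p)`, gives the pointwise bound
`|h(s)|^p ≤ δ^(1-p) s^(-δ-1) ∫_0^s |f(u)|^p u^δ du`. Integrating over `s ∈ (0,1]` and exchanging
the order of integration, `∫_u^1 s^(-δ-1) ds ≤ u^(-δ)/δ` turns the right side into
`δ^(-p) ∫_0^1 |f|^p`.
-/

open MeasureTheory Set
open scoped ENNReal

theorem enorm_ofReal_cpow {s : ℝ} (hs : 0 < s) (w : ℂ) :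
    ‖(s : ℂ) ^ w‖ₑ = ENNReal.ofReal (s ^ w.re) := by
  rw [← ofReal_norm, Complex.norm_cpow_eq_rpow_re_of_pos hs]

theorem enorm_div_ofReal_cpow (z : ℂ) {u : ℝ} (hu : 0 < u) (w : ℂ) :
    ‖z / (u : ℂ) ^ w‖ₑ = ‖z‖ₑ * ENNReal.ofReal (u ^ (-w.re)) := by
  rw [← ofReal_norm, norm_div, Complex.norm_cpow_eq_rpow_re_of_pos hu, div_eq_mul_inv,
    ← Real.rpow_neg hu.le, ENNReal.ofReal_mul (norm_nonneg _), ofReal_norm]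

theorem lintegral_Ioc_zero_ofReal_rpow {δ s : ℝ} (hδ : 0 < δ) (hs : 0 ≤ s) :
    ∫⁻ u in Ioc 0 s, ENNReal.ofReal (u ^ (δ - 1)) = ENNReal.ofReal (s ^ δ / δ) := by
  have hint : IntegrableOn (fun u : ℝ ↦ u ^ (δ - 1)) (Ioc 0 s) :=
    (intervalIntegrable_iff_integrableOn_Ioc_of_le hs).1
      (intervalIntegral.intervalIntegrable_rpow' (by linarith))
  rw [← ofReal_integral_eq_lintegral_ofReal hint
      ((ae_restrict_iff' measurableSet_Ioc).2 (ae_of_all _ fun u hu ↦ Real.rpow_nonneg hu.1.le _)),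
    ← intervalIntegral.integral_of_le hs, integral_rpow (Or.inl (by linarith)),
    sub_add_cancel, Real.zero_rpow hδ.ne', sub_zero]

theorem lintegral_Ioi_ofReal_rpow {δ u : ℝ} (hδ : 0 < δ) (hu : 0 < u) :
    ∫⁻ s in Ioi u, ENNReal.ofReal (s ^ (-δ - 1)) = ENNReal.ofReal (u ^ (-δ) / δ) := by
  rw [← ofReal_integral_eq_lintegral_ofReal (integrableOn_Ioi_rpow_of_lt (by linarith) hu)
      ((ae_restrict_iff' measurableSet_Ioi).2 (ae_of_all _ fun s hs ↦ by
        have : 0 < s := hu.trans hs; positivity)),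
    integral_Ioi_rpow_of_lt (by linarith) hu, sub_add_cancel, neg_div, div_neg, neg_neg]

theorem rpow_lintegral_Ioc_mul_rpow_le {P δ s : ℝ} (hP : 1 ≤ P) (hδ : 0 < δ) (hs : 0 ≤ s)
    {g : ℝ → ℝ≥0∞} (hg : AEMeasurable g (volume.restrict (Ioc 0 s))) :
    (∫⁻ u in Ioc 0 s, g u * ENNReal.ofReal (u ^ (δ - 1 + 1 / P))) ^ P ≤
      (∫⁻ u in Ioc 0 s, g u ^ P * ENNReal.ofReal (u ^ δ)) *
        ENNReal.ofReal ((s ^ δ / δ) ^ (P - 1)) := by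
  have hP0 : 0 < P := by linarith
  have hq : 0 ≤ 1 - 1 / P := by
    rw [sub_nonneg, div_le_one hP0]; exact hP
  have hsplit : ∀ u ∈ Ioc (0 : ℝ) s, g u * ENNReal.ofReal (u ^ (δ - 1 + 1 / P)) =
      (g u ^ P * ENNReal.ofReal (u ^ δ)) ^ (1 / P) *
        ENNReal.ofReal (u ^ (δ - 1)) ^ (1 - 1 / P) := by
    intro u hu
    rw [ENNReal.mul_rpow_of_nonneg _ _ (by positivity), ← ENNReal.rpow_mul,
      mul_one_div_cancel hP0.ne', ENNReal.rpow_one,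
      ENNReal.ofReal_rpow_of_nonneg (Real.rpow_nonneg hu.1.le _) (by positivity),
      ENNReal.ofReal_rpow_of_nonneg (Real.rpow_nonneg hu.1.le _) hq, mul_assoc,
      ← ENNReal.ofReal_mul (Real.rpow_nonneg (Real.rpow_nonneg hu.1.le _) _),
      ← Real.rpow_mul hu.1.le, ← Real.rpow_mul hu.1.le, ← Real.rpow_add hu.1]
    congr 3
    field_simp
    ring
  calc (∫⁻ u in Ioc 0 s, g u * ENNReal.ofReal (u ^ (δ - 1 + 1 / P))) ^ P
      = (∫⁻ u in Ioc 0 s, (g u ^ P * ENNReal.ofReal (u ^ δ)) ^ (1 / P) *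
          ENNReal.ofReal (u ^ (δ - 1)) ^ (1 - 1 / P)) ^ P := by
        rw [setLIntegral_congr_fun measurableSet_Ioc hsplit]
    _ ≤ ((∫⁻ u in Ioc 0 s, g u ^ P * ENNReal.ofReal (u ^ δ)) ^ (1 / P) *
          (∫⁻ u in Ioc 0 s, ENNReal.ofReal (u ^ (δ - 1))) ^ (1 - 1 / P)) ^ P := by
        gcongr
        exact ENNReal.lintegral_mul_norm_pow_le (by fun_prop) (by fun_prop) (by positivity) hq
          (by ring)
    _ = (∫⁻ u in Ioc 0 s, g u ^ P * ENNReal.ofReal (u ^ δ)) *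
          ENNReal.ofReal ((s ^ δ / δ) ^ (P - 1)) := by
        rw [lintegral_Ioc_zero_ofReal_rpow hδ hs, ENNReal.mul_rpow_of_nonneg _ _ hP0.le,
          ← ENNReal.rpow_mul, ← ENNReal.rpow_mul, one_div_mul_cancel hP0.ne', ENNReal.rpow_one,
          ENNReal.ofReal_rpow_of_nonneg (by positivity) (mul_nonneg hq hP0.le)]
        congr 3
        field_simp

theorem lintegral_Ioc_rpow_mul_lintegral_Ioc_le {δ b : ℝ} (hδ : 0 < δ) {G : ℝ → ℝ≥0∞}
    (hG : AEMeasurable G (volume.restrict (Ioc 0 b))) :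
    ∫⁻ s in Ioc 0 b, ENNReal.ofReal (s ^ (-δ - 1)) *
        ∫⁻ u in Ioc 0 s, G u * ENNReal.ofReal (u ^ δ) ≤
      ENNReal.ofReal δ⁻¹ * ∫⁻ u in Ioc 0 b, G u := by
  set F : ℝ → ℝ≥0∞ := fun u ↦ G u * ENNReal.ofReal (u ^ δ)
  set K : ℝ → ℝ → ℝ≥0∞ := fun s u ↦ ENNReal.ofReal (s ^ (-δ - 1)) * (Iic s).indicator F u
  have hK : AEMeasurable (Function.uncurry K)
      ((volume.restrict (Ioc 0 b)).prod (volume.restrict (Ioc 0 b))) := by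
    change AEMeasurable (fun p : ℝ × ℝ ↦ ENNReal.ofReal (p.1 ^ (-δ - 1)) *
      {p : ℝ × ℝ | p.2 ≤ p.1}.indicator (fun p ↦ F p.2) p) _
    have hF : AEMeasurable F (volume.restrict (Ioc 0 b)) := hG.mul (by fun_prop)
    exact (measurable_fst.pow_const _).ennreal_ofReal.aemeasurable.mul
      (hF.comp_snd.indicator (measurableSet_le measurable_snd measurable_fst))
  have hinner_s : ∀ s ∈ Ioc (0 : ℝ) b, ENNReal.ofReal (s ^ (-δ - 1)) * ∫⁻ u in Ioc 0 s, F u =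
      ∫⁻ u in Ioc 0 b, K s u := by
    intro s hs
    rw [lintegral_const_mul' _ _ ENNReal.ofReal_ne_top, lintegral_indicator measurableSet_Iic,
      Measure.restrict_restrict measurableSet_Iic, Iic_inter_Ioc_of_le hs.2]
  have hinner_u : ∀ u ∈ Ioc (0 : ℝ) b, ∫⁻ s in Ioc 0 b, K s u ≤ ENNReal.ofReal δ⁻¹ * G u := by
    intro u hu
    have hKu : (fun s ↦ K s u) = (Ici u).indicator fun s ↦ F u * ENNReal.ofReal (s ^ (-δ - 1)) := by
      ext s
      by_cases hsu : u ≤ s <;> simp [K, hsu, mul_comm]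
    calc ∫⁻ s in Ioc 0 b, K s u
        ≤ ∫⁻ s in Ici u, F u * ENNReal.ofReal (s ^ (-δ - 1)) := by
          rw [hKu, ← lintegral_indicator measurableSet_Ici]
          exact setLIntegral_le_lintegral _ _
      _ = F u * ENNReal.ofReal (u ^ (-δ) / δ) := by
          rw [lintegral_const_mul _ (by fun_prop),
            setLIntegral_congr Ioi_ae_eq_Ici.symm, lintegral_Ioi_ofReal_rpow hδ hu.1]
      _ = ENNReal.ofReal δ⁻¹ * G u := by
          rw [mul_assoc, ← ENNReal.ofReal_mul (Real.rpow_nonneg hu.1.le _), ← mul_div_assoc,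
            ← Real.rpow_add hu.1, add_neg_cancel, Real.rpow_zero, one_div, mul_comm]
  calc ∫⁻ s in Ioc 0 b, ENNReal.ofReal (s ^ (-δ - 1)) * ∫⁻ u in Ioc 0 s, F u
      = ∫⁻ s in Ioc 0 b, ∫⁻ u in Ioc 0 b, K s u := setLIntegral_congr_fun measurableSet_Ioc hinner_s
    _ = ∫⁻ u in Ioc 0 b, ∫⁻ s in Ioc 0 b, K s u := lintegral_lintegral_swap hK
    _ ≤ ∫⁻ u in Ioc 0 b, ENNReal.ofReal δ⁻¹ * G u := setLIntegral_mono' measurableSet_Ioc hinner_u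
    _ = ENNReal.ofReal δ⁻¹ * ∫⁻ u in Ioc 0 b, G u := lintegral_const_mul' _ _ ENNReal.ofReal_ne_top

theorem eLpNorm_le_mul_of_lintegral_rpow_le {α ε ε' : Type*} [MeasurableSpace α] {μ : Measure α}
    [ENorm ε] [ENorm ε'] {p : ℝ≥0∞} (hp0 : p ≠ 0) (hp : p ≠ ∞) {f : α → ε} {g : α → ε'}
    {C : ℝ≥0∞}
    (h : ∫⁻ x, ‖g x‖ₑ ^ p.toReal ∂μ ≤ C ^ p.toReal * ∫⁻ x, ‖f x‖ₑ ^ p.toReal ∂μ) :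
    eLpNorm g p μ ≤ C * eLpNorm f p μ := by
  have hP : 0 < p.toReal := ENNReal.toReal_pos hp0 hp
  rw [eLpNorm_eq_lintegral_rpow_enorm_toReal hp0 hp, eLpNorm_eq_lintegral_rpow_enorm_toReal hp0 hp]
  calc (∫⁻ x, ‖g x‖ₑ ^ p.toReal ∂μ) ^ (1 / p.toReal)
      ≤ (C ^ p.toReal * ∫⁻ x, ‖f x‖ₑ ^ p.toReal ∂μ) ^ (1 / p.toReal) :=
        ENNReal.rpow_le_rpow h (by positivity)
    _ = C * (∫⁻ x, ‖f x‖ₑ ^ p.toReal ∂μ) ^ (1 / p.toReal) := by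
        rw [ENNReal.mul_rpow_of_nonneg _ _ (by positivity), ← ENNReal.rpow_mul,
          mul_one_div_cancel hP.ne', ENNReal.rpow_one]

theorem aestronglyMeasurable_setIntegral_Ioc {E : Type*} [NormedAddCommGroup E] [NormedSpace ℝ E]
    {b : ℝ} {F : ℝ → E} (hF : AEStronglyMeasurable F (volume.restrict (Ioc 0 b))) :
    AEStronglyMeasurable (fun s ↦ ∫ u in Ioc 0 s, F u) (volume.restrict (Ioc 0 b)) := by
  have hprod : AEStronglyMeasurable (fun p : ℝ × ℝ ↦ {p : ℝ × ℝ | p.2 ≤ p.1}.indicator (F ·.2) p)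
      ((volume.restrict (Ioc 0 b)).prod (volume.restrict (Ioc 0 b))) :=
    hF.comp_snd.indicator (measurableSet_le measurable_snd measurable_fst)
  refine hprod.integral_prod_right'.congr ?_
  filter_upwards [ae_restrict_mem measurableSet_Ioc] with s hs
  change ∫ u in Ioc 0 b, (Iic s).indicator F u = _
  rw [integral_indicator measurableSet_Iic, Measure.restrict_restrict measurableSet_Iic,
    Iic_inter_Ioc_of_le hs.2]

theorem enorm_cpow_mul_setIntegral_rpow_le {P δ s : ℝ} (hP : 1 ≤ P) (hδ : 0 < δ) (hs : 0 < s)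
    {lam : ℂ} (hlam : lam.re = -δ - 1 / P) {f : ℝ → ℂ}
    (hf : AEMeasurable (fun u ↦ ‖f u‖ₑ) (volume.restrict (Ioc 0 s))) :
    ‖(s : ℂ) ^ lam * ∫ u in Ioc 0 s, f u / (u : ℂ) ^ (lam + 1)‖ₑ ^ P ≤
      ENNReal.ofReal (δ ^ (1 - P)) * (ENNReal.ofReal (s ^ (-δ - 1)) *
        ∫⁻ u in Ioc 0 s, ‖f u‖ₑ ^ P * ENNReal.ofReal (u ^ δ)) := by
  have hP0 : 0 < P := by linarith
  have hkernel : ∫⁻ u in Ioc 0 s, ‖f u / (u : ℂ) ^ (lam + 1)‖ₑ =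
      ∫⁻ u in Ioc 0 s, ‖f u‖ₑ * ENNReal.ofReal (u ^ (δ - 1 + 1 / P)) := by
    refine setLIntegral_congr_fun measurableSet_Ioc fun u hu ↦ ?_
    rw [enorm_div_ofReal_cpow _ hu.1, Complex.add_re, Complex.one_re, hlam]
    ring_nf
  have hpow : ENNReal.ofReal (s ^ lam.re) ^ P * ENNReal.ofReal ((s ^ δ / δ) ^ (P - 1)) =
      ENNReal.ofReal (δ ^ (1 - P)) * ENNReal.ofReal (s ^ (-δ - 1)) := by
    rw [ENNReal.ofReal_rpow_of_nonneg (by positivity) hP0.le, ← ENNReal.ofReal_mul (by positivity),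
      ← ENNReal.ofReal_mul (by positivity), Real.div_rpow (by positivity) hδ.le,
      ← Real.rpow_mul hs.le, ← Real.rpow_mul hs.le, div_eq_mul_inv, ← Real.rpow_neg hδ.le,
      neg_sub, ← mul_assoc, ← Real.rpow_add hs, mul_comm, hlam]
    congr 2
    field_simp
    ring_nf
  calc ‖(s : ℂ) ^ lam * ∫ u in Ioc 0 s, f u / (u : ℂ) ^ (lam + 1)‖ₑ ^ P
      = (ENNReal.ofReal (s ^ lam.re) * ‖∫ u in Ioc 0 s, f u / (u : ℂ) ^ (lam + 1)‖ₑ) ^ P := by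
        rw [enorm_mul, enorm_ofReal_cpow hs]
    _ ≤ (ENNReal.ofReal (s ^ lam.re) *
          ∫⁻ u in Ioc 0 s, ‖f u‖ₑ * ENNReal.ofReal (u ^ (δ - 1 + 1 / P))) ^ P := by
        rw [← hkernel]
        gcongr
        exact enorm_integral_le_lintegral_enorm _
    _ ≤ ENNReal.ofReal (s ^ lam.re) ^ P *
          ((∫⁻ u in Ioc 0 s, ‖f u‖ₑ ^ P * ENNReal.ofReal (u ^ δ)) *
            ENNReal.ofReal ((s ^ δ / δ) ^ (P - 1))) := by
        rw [ENNReal.mul_rpow_of_nonneg _ _ hP0.le]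
        gcongr
        exact rpow_lintegral_Ioc_mul_rpow_le hP hδ hs.le hf
    _ = _ := by
        rw [mul_comm (∫⁻ _ in _, _), ← mul_assoc, hpow, mul_assoc]

theorem lintegral_Ioc_enorm_cpow_mul_setIntegral_rpow_le {P δ : ℝ} (hP : 1 ≤ P) (hδ : 0 < δ)
    {lam : ℂ} (hlam : lam.re = -δ - 1 / P) {f : ℝ → ℂ}
    (hf : AEMeasurable (fun u ↦ ‖f u‖ₑ) (volume.restrict (Ioc 0 1))) :
    ∫⁻ s in Ioc (0 : ℝ) 1, ‖(s : ℂ) ^ lam * ∫ u in Ioc 0 s, f u / (u : ℂ) ^ (lam + 1)‖ₑ ^ P ≤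
      ENNReal.ofReal δ⁻¹ ^ P * ∫⁻ u in Ioc 0 1, ‖f u‖ₑ ^ P := by
  have hpointwise : ∀ s ∈ Ioc (0 : ℝ) 1,
      ‖(s : ℂ) ^ lam * ∫ u in Ioc 0 s, f u / (u : ℂ) ^ (lam + 1)‖ₑ ^ P ≤
        ENNReal.ofReal (δ ^ (1 - P)) * (ENNReal.ofReal (s ^ (-δ - 1)) *
          ∫⁻ u in Ioc 0 s, ‖f u‖ₑ ^ P * ENNReal.ofReal (u ^ δ)) := fun s hs ↦
    enorm_cpow_mul_setIntegral_rpow_le hP hδ hs.1 hlam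
      (hf.mono_measure (Measure.restrict_mono (Ioc_subset_Ioc_right hs.2) le_rfl))
  calc _ ≤ ENNReal.ofReal (δ ^ (1 - P)) * ∫⁻ s in Ioc 0 1, ENNReal.ofReal (s ^ (-δ - 1)) *
          ∫⁻ u in Ioc 0 s, ‖f u‖ₑ ^ P * ENNReal.ofReal (u ^ δ) := by
        rw [← lintegral_const_mul' _ _ ENNReal.ofReal_ne_top]
        exact setLIntegral_mono' measurableSet_Ioc hpointwise
    _ ≤ ENNReal.ofReal (δ ^ (1 - P)) * (ENNReal.ofReal δ⁻¹ * ∫⁻ u in Ioc 0 1, ‖f u‖ₑ ^ P) := by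
        gcongr
        exact lintegral_Ioc_rpow_mul_lintegral_Ioc_le hδ (hf.pow_const P)
    _ = ENNReal.ofReal δ⁻¹ ^ P * ∫⁻ u in Ioc 0 1, ‖f u‖ₑ ^ P := by
        rw [← mul_assoc, ← ENNReal.ofReal_mul (by positivity),
          ENNReal.ofReal_rpow_of_nonneg (by positivity) (by linarith), Real.inv_rpow hδ.le,
          ← Real.rpow_neg_one δ, ← Real.rpow_add hδ, ← Real.rpow_neg hδ.le]
        ring_nf

theorem stmt12_general (p : ℝ≥0∞) (hp : 1 ≤ p) (hp' : p ≠ ∞) (lam : ℂ)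
    (hl : lam.re < -(1 / p.toReal)) (f : ℝ → ℂ)
    (hf : MemLp f p (volume.restrict (Ioc (0:ℝ) 1))) :
    let h : ℝ → ℂ := fun s => -((s : ℂ) ^ lam * ∫ u in Ioc (0:ℝ) s, f u / (u : ℂ) ^ (lam + 1))
    MemLp h p (volume.restrict (Ioc (0:ℝ) 1)) ∧
    eLpNorm h p (volume.restrict (Ioc (0:ℝ) 1)) ≤
      ENNReal.ofReal ((-lam.re - 1 / p.toReal)⁻¹) *
        eLpNorm f p (volume.restrict (Ioc (0:ℝ) 1)) := by
  intro h
  have hp0 : p ≠ 0 := (zero_lt_one.trans_le hp).ne'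
  have hP : 1 ≤ p.toReal := by simpa using ENNReal.toReal_mono hp' hp
  have hnorm : eLpNorm h p (volume.restrict (Ioc 0 1)) ≤
      ENNReal.ofReal (-lam.re - 1 / p.toReal)⁻¹ * eLpNorm f p (volume.restrict (Ioc 0 1)) :=
    eLpNorm_le_mul_of_lintegral_rpow_le hp0 hp' <| by
      simpa only [h, enorm_neg] using lintegral_Ioc_enorm_cpow_mul_setIntegral_rpow_le hP
        (by linarith : 0 < -lam.re - 1 / p.toReal) (by ring) hf.1.enorm
  have hmeas : AEStronglyMeasurable h (volume.restrict (Ioc 0 1)) :=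
    ((by fun_prop : Measurable fun s : ℝ ↦ (s : ℂ) ^ lam).aestronglyMeasurable.mul
      (aestronglyMeasurable_setIntegral_Ioc (hf.1.div₀
        (by fun_prop : Measurable fun u : ℝ ↦ (u : ℂ) ^ (lam + 1)).aestronglyMeasurable))).neg
  exact ⟨⟨hmeas, hnorm.trans_lt (ENNReal.mul_lt_top ENNReal.ofReal_lt_top hf.2)⟩, hnorm⟩

/-- For `1 ≤ p < ∞` and `Re λ < -1/p`: if `f ∈ L^p[0,1]` satisfies
`∫_0^1 f(u)/u^{λ+1} du = 0`, then `h(s) = -s^λ ∫_0^s f(u)/u^{λ+1} du` belongs to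
`L^p[0,1]` with `‖h‖_p ≤ ‖f‖_p / (-Re λ - 1/p)`. -/
theorem stmt12 (p : ℝ≥0∞) (hp : 1 ≤ p) (hp' : p ≠ ∞) (lam : ℂ)
    (hl : lam.re < -(1 / p.toReal)) (f : ℝ → ℂ)
    (hf : MemLp f p (volume.restrict (Ioc (0:ℝ) 1)))
    (hker : ∫ u in Ioc (0:ℝ) 1, f u / (u : ℂ) ^ (lam + 1) = 0) :
    let h : ℝ → ℂ := fun s => -((s : ℂ) ^ lam * ∫ u in Ioc (0:ℝ) s, f u / (u : ℂ) ^ (lam + 1))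
    MemLp h p (volume.restrict (Ioc (0:ℝ) 1)) ∧
    eLpNorm h p (volume.restrict (Ioc (0:ℝ) 1)) ≤
      ENNReal.ofReal ((-lam.re - 1 / p.toReal)⁻¹) *
        eLpNorm f p (volume.restrict (Ioc (0:ℝ) 1)) :=
  stmt12_general p hp hp' lam hl f hf
end

section
/- Let Re α > 0 and 1 < p ≤ ∞. The generalized Cesàro-Hardy operator C_α f(s) = (α/s^α) ∫_0^s (s-u)^{α-1} f(u) du is bounded on L^p[0,1], with ‖C_α f‖_p ≤ |α| Γ(Re α) Γ(1/p') / Γ(Re α + 1/p') · ‖f‖_p, and satisfies the subordination formula C_α f(s) = α ∫_0^∞ (1-e^{-t})^{α-1} (T(t)f)(s) dt. -/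
/-!
Substituting `u = r s` turns `C_α f (s)` into `α ∫₀¹ (1 - r)^(α-1) f (r s) dr`, and `r = e^(-t)`
turns this into the subordination formula. Hence
`|C_α f (s)| ≤ |α| ∫₀¹ (1 - r)^(Re α - 1) |f (r s)| dr`. For `p < ∞`, Hölder's inequality for the
finite measure `(1 - r)^(Re α - 1) r^(-1/p) dr`, of mass `B(Re α, 1/p')`, followed by Tonelli and
`r ∫₀¹ |f (r s)|^p ds ≤ ∫₀¹ |f|^p`, bounds `‖C_α f‖_p^p` by `(|α| B(Re α, 1/p'))^p ‖f‖_p^p`.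
For `p = ∞` the constant is `∫₀¹ (1 - r)^(Re α - 1) dr = B(Re α, 1)`.
-/

open MeasureTheory Set
open scoped ENNReal

section Dilation

open ProbabilityTheory

lemma ofReal_mul_setLIntegral_comp_mul_le {r : ℝ} (hr0 : 0 < r) (hr1 : r ≤ 1) (h : ℝ → ℝ≥0∞) :
    ENNReal.ofReal r * ∫⁻ s in Ioc (0:ℝ) 1, h (r * s) ≤ ∫⁻ u in Ioc (0:ℝ) 1, h u := by
  have hemb := measurableEmbedding_mulLeft₀ hr0.ne'
  have hpre : (r * ·) ⁻¹' Ioc 0 r = Ioc (0:ℝ) 1 := by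
    rw [preimage_const_mul_Ioc₀ _ _ hr0, zero_div, div_self hr0.ne']
  have hmap : ∫⁻ s in Ioc (0:ℝ) 1, h (r * s)
      = ENNReal.ofReal r⁻¹ * ∫⁻ u in Ioc (0:ℝ) r, h u := by
    rw [← hpre, ← hemb.lintegral_map, ← hemb.restrict_map, Real.map_volume_mul_left hr0.ne',
      Measure.restrict_smul, lintegral_smul_measure, abs_of_pos (inv_pos.2 hr0), smul_eq_mul]
  calc ENNReal.ofReal r * ∫⁻ s in Ioc (0:ℝ) 1, h (r * s)
      = ∫⁻ u in Ioc (0:ℝ) r, h u := by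
        rw [hmap, ← mul_assoc, ← ENNReal.ofReal_mul hr0.le, mul_inv_cancel₀ hr0.ne',
          ENNReal.ofReal_one, one_mul]
    _ ≤ ∫⁻ u in Ioc (0:ℝ) 1, h u := lintegral_mono_set (Ioc_subset_Ioc_right hr1)

lemma quasiMeasurePreserving_mul_const {s : ℝ} (hs : s ≠ 0) :
    Measure.QuasiMeasurePreserving (· * s) (volume : Measure ℝ) volume :=
  ⟨measurable_mul_const s, by
    rw [Real.map_volume_mul_right hs]
    exact Measure.smul_absolutelyContinuous⟩

lemma ae_restrict_Ioc_comp_mul {s : ℝ} (hs : s ∈ Ioc (0:ℝ) 1) {P : ℝ → Prop}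
    (hP : ∀ᵐ u ∂volume.restrict (Ioc (0:ℝ) 1), P u) :
    ∀ᵐ r ∂volume.restrict (Ioc (0:ℝ) 1), P (r * s) := by
  rw [ae_restrict_iff' measurableSet_Ioc] at hP ⊢
  filter_upwards [(quasiMeasurePreserving_mul_const hs.1.ne').ae hP] with r hr hr_mem
  exact hr ⟨mul_pos hr_mem.1 hs.1, mul_le_one₀ hr_mem.2 hs.1.le hs.2⟩

lemma rpow_lintegral_mul_le {α : Type*} [MeasurableSpace α] {μ : Measure α} {w F : α → ℝ≥0∞}
    (hw : AEMeasurable w μ) (hF : AEMeasurable F μ) {q : ℝ} (hq : 1 ≤ q) :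
    (∫⁻ x, w x * F x ∂μ) ^ q ≤ (∫⁻ x, w x ∂μ) ^ (q - 1) * ∫⁻ x, w x * F x ^ q ∂μ := by
  have hq0 : 0 < q := zero_lt_one.trans_le hq
  have hq' : 0 ≤ 1 - 1 / q := by simp [inv_le_one_of_one_le₀ hq]
  have holder := ENNReal.lintegral_mul_norm_pow_le (g := fun x => w x * F x ^ q) hw
    (hw.mul (hF.pow_const q)) hq' (by positivity : 0 ≤ 1 / q) (by ring)
  have hsplit : ∀ x, w x ^ (1 - 1 / q) * (w x * F x ^ q) ^ (1 / q) = w x * F x := fun x => by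
    rw [ENNReal.mul_rpow_of_nonneg _ _ (by positivity), ← ENNReal.rpow_mul,
      mul_one_div_cancel hq0.ne', ENNReal.rpow_one, ← mul_assoc,
      ← ENNReal.rpow_add_of_nonneg _ _ hq' (by positivity), sub_add_cancel, ENNReal.rpow_one]
  simp_rw [hsplit] at holder
  calc (∫⁻ x, w x * F x ∂μ) ^ q
      ≤ ((∫⁻ x, w x ∂μ) ^ (1 - 1 / q) * (∫⁻ x, w x * F x ^ q ∂μ) ^ (1 / q)) ^ q :=
        ENNReal.rpow_le_rpow holder hq0.le
    _ = _ := by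
        rw [ENNReal.mul_rpow_of_nonneg _ _ hq0.le, ← ENNReal.rpow_mul, ← ENNReal.rpow_mul,
          one_div_mul_cancel hq0.ne', ENNReal.rpow_one, sub_mul, one_div_mul_cancel hq0.ne',
          one_mul]

lemma lintegral_one_sub_rpow_mul_rpow {a b : ℝ} (ha : 0 < a) (hb : 0 < b) :
    ∫⁻ x in Ioo (0:ℝ) 1, ENNReal.ofReal ((1 - x) ^ (a - 1) * x ^ (b - 1))
      = ENNReal.ofReal (beta a b) := by
  have hB := beta_pos hb ha
  have h := lintegral_betaPDF_eq_one hb ha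
  simp_rw [lintegral_betaPDF, mul_assoc, ENNReal.ofReal_mul (one_div_pos.2 hB).le] at h
  rw [lintegral_const_mul' _ _ ENNReal.ofReal_ne_top] at h
  have hcomm : beta a b = beta b a := by rw [beta, beta, mul_comm, add_comm]
  simp_rw [mul_comm (((1:ℝ) - _) ^ (a - 1)), hcomm]
  calc _ = ENNReal.ofReal (beta b a) * ENNReal.ofReal (1 / beta b a) *
        ∫⁻ x in Ioo (0:ℝ) 1, ENNReal.ofReal (x ^ (b - 1) * (1 - x) ^ (a - 1)) := by
        rw [← ENNReal.ofReal_mul hB.le, mul_one_div_cancel hB.ne', ENNReal.ofReal_one, one_mul]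
    _ = _ := by rw [mul_assoc, h, mul_one]

lemma image_exp_neg_Ioi_zero : (fun t : ℝ => Real.exp (-t)) '' Ioi 0 = Ioo 0 1 := by
  ext r
  constructor
  · rintro ⟨t, ht, rfl⟩
    exact ⟨Real.exp_pos _, Real.exp_lt_one_iff.mpr (neg_neg_iff_pos.mpr ht)⟩
  · rintro ⟨hr0, hr1⟩
    exact ⟨-Real.log r, neg_pos.mpr (Real.log_neg hr0 hr1), by simp [Real.exp_log hr0]⟩

lemma integral_Ioc_zero_one_eq_integral_Ioi_exp_neg {E : Type*} [NormedAddCommGroup E]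
    [NormedSpace ℝ E] (G : ℝ → E) :
    ∫ r in Ioc (0:ℝ) 1, G r = ∫ t in Ioi (0:ℝ), Real.exp (-t) • G (Real.exp (-t)) := by
  rw [integral_Ioc_eq_integral_Ioo, ← image_exp_neg_Ioi_zero,
    integral_image_eq_integral_abs_deriv_smul measurableSet_Ioi
      (fun t _ => (hasDerivAt_neg t).exp.hasDerivWithinAt)
      (Real.exp_injective.comp neg_injective).injOn]
  simp [abs_of_pos (Real.exp_pos _)]

noncomputable def cesaroHardy (α : ℂ) (f : ℝ → ℂ) (s : ℝ) : ℂ :=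
  α / (s : ℂ) ^ α * ∫ u in Ioc (0:ℝ) s, ((s - u : ℝ) : ℂ) ^ (α - 1) * f u

noncomputable def dilationMean (α : ℂ) (f : ℝ → ℂ) (s : ℝ) : ℂ :=
  ∫ r in Ioc (0:ℝ) 1, ((1 - r : ℝ) : ℂ) ^ (α - 1) * f (r * s)

lemma integral_Ioc_sub_cpow_mul {α : ℂ} (f : ℝ → ℂ) {s : ℝ} (hs : 0 < s) :
    ∫ u in Ioc (0:ℝ) s, ((s - u : ℝ) : ℂ) ^ (α - 1) * f u = (s : ℂ) ^ α * dilationMean α f s := by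
  have hs' : (s : ℂ) ≠ 0 := Complex.ofReal_ne_zero.mpr hs.ne'
  have hscale := intervalIntegral.smul_integral_comp_mul_right
    (fun u => ((s - u : ℝ) : ℂ) ^ (α - 1) * f u) s (a := 0) (b := 1)
  rw [zero_mul, one_mul] at hscale
  rw [← intervalIntegral.integral_of_le hs.le, ← hscale,
    intervalIntegral.integral_of_le zero_le_one, dilationMean, Complex.real_smul,
    ← integral_const_mul, ← integral_const_mul]
  have hpow : (s : ℂ) * (s : ℂ) ^ (α - 1) = (s : ℂ) ^ α := by
    rw [Complex.cpow_sub _ _ hs', Complex.cpow_one, mul_div_cancel₀ _ hs']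
  refine setIntegral_congr_fun measurableSet_Ioc fun r hr => ?_
  rw [← hpow, show s - r * s = s * (1 - r) by ring, Complex.ofReal_mul,
    Complex.mul_cpow_ofReal_nonneg hs.le (sub_nonneg.mpr hr.2)]
  ring

lemma cesaroHardy_eq_mul_dilationMean (α : ℂ) (f : ℝ → ℂ) {s : ℝ} (hs : 0 < s) :
    cesaroHardy α f s = α * dilationMean α f s := by
  have hsα : (s : ℂ) ^ α ≠ 0 := by
    simp [Complex.cpow_eq_zero_iff, hs.ne']
  rw [cesaroHardy, integral_Ioc_sub_cpow_mul f hs, div_mul_eq_mul_div, mul_div_assoc,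
    mul_div_cancel_left₀ _ hsα]

lemma enorm_dilationMean_le (α : ℂ) (g : ℝ → ℂ) (s : ℝ) :
    ‖dilationMean α g s‖ₑ
      ≤ ∫⁻ r in Ioo (0:ℝ) 1, ENNReal.ofReal ((1 - r) ^ (α.re - 1)) * ‖g (r * s)‖ₑ :=
  calc ‖dilationMean α g s‖ₑ
      ≤ ∫⁻ r in Ioc (0:ℝ) 1, ‖((1 - r : ℝ) : ℂ) ^ (α - 1) * g (r * s)‖ₑ :=
        enorm_integral_le_lintegral_enorm _
    _ = ∫⁻ r in Ioo (0:ℝ) 1, ‖((1 - r : ℝ) : ℂ) ^ (α - 1) * g (r * s)‖ₑ := by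
        rw [Measure.restrict_congr_set Ioo_ae_eq_Ioc]
    _ = _ := setLIntegral_congr_fun measurableSet_Ioo fun r hr => by
        rw [enorm_mul, ← ofReal_norm, Complex.norm_cpow_eq_rpow_re_of_pos (sub_pos.2 hr.2),
          Complex.sub_re, Complex.one_re]

lemma stronglyMeasurable_dilationMean (α : ℂ) {g : ℝ → ℂ} (hg : Measurable g) :
    StronglyMeasurable (dilationMean α g) :=
  StronglyMeasurable.integral_prod_right' (ν := volume.restrict (Ioc (0:ℝ) 1))
    (f := fun z : ℝ × ℝ => ((1 - z.2 : ℝ) : ℂ) ^ (α - 1) * g (z.2 * z.1))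
    (by fun_prop)

lemma dilationMean_eq_of_ae_eq (α : ℂ) {f g : ℝ → ℂ}
    (hfg : f =ᵐ[volume.restrict (Ioc (0:ℝ) 1)] g) {s : ℝ} (hs : s ∈ Ioc (0:ℝ) 1) :
    dilationMean α f s = dilationMean α g s :=
  integral_congr_ae <| by
    filter_upwards [ae_restrict_Ioc_comp_mul hs hfg] with r hr
    rw [hr]

lemma lintegral_dilation_le_of_ae_le {a : ℝ} (ha : 0 < a) {h : ℝ → ℝ≥0∞} {M : ℝ≥0∞}
    (hM : ∀ᵐ u ∂volume.restrict (Ioc (0:ℝ) 1), h u ≤ M) {s : ℝ} (hs : s ∈ Ioc (0:ℝ) 1) :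
    ∫⁻ r in Ioo (0:ℝ) 1, ENNReal.ofReal ((1 - r) ^ (a - 1)) * h (r * s)
      ≤ ENNReal.ofReal (beta a 1) * M :=
  calc ∫⁻ r in Ioo (0:ℝ) 1, ENNReal.ofReal ((1 - r) ^ (a - 1)) * h (r * s)
      ≤ ∫⁻ r in Ioo (0:ℝ) 1, ENNReal.ofReal ((1 - r) ^ (a - 1)) * M := by
        refine lintegral_mono_ae ?_
        filter_upwards [ae_restrict_of_ae_restrict_of_subset Ioo_subset_Ioc_self
          (ae_restrict_Ioc_comp_mul hs hM)] with r hr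
        gcongr
    _ = ENNReal.ofReal (beta a 1) * M := by
        rw [lintegral_mul_const _ (by fun_prop), ← lintegral_one_sub_rpow_mul_rpow ha one_pos]
        simp

-- Hölder's inequality for the finite measure `(1 - r)^(a-1) r^(-1/q) dr`, applied to
-- `r ↦ r^(1/q) h (r s)`.
lemma rpow_lintegral_dilation_le (a : ℝ) {q : ℝ} (hq : 1 ≤ q) {h : ℝ → ℝ≥0∞}
    (hh : Measurable h) (s : ℝ) :
    (∫⁻ r in Ioo (0:ℝ) 1, ENNReal.ofReal ((1 - r) ^ (a - 1)) * h (r * s)) ^ q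
      ≤ (∫⁻ r in Ioo (0:ℝ) 1, ENNReal.ofReal ((1 - r) ^ (a - 1) * r ^ (-q⁻¹))) ^ (q - 1) *
          ∫⁻ r in Ioo (0:ℝ) 1, ENNReal.ofReal ((1 - r) ^ (a - 1) * r ^ (-q⁻¹)) *
            (ENNReal.ofReal r * h (r * s) ^ q) := by
  have hq0 : 0 < q := zero_lt_one.trans_le hq
  set w : ℝ → ℝ≥0∞ := fun r => ENNReal.ofReal ((1 - r) ^ (a - 1) * r ^ (-q⁻¹))
  have hfactor : ∀ r ∈ Ioo (0:ℝ) 1, ENNReal.ofReal ((1 - r) ^ (a - 1)) * h (r * s)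
      = w r * (ENNReal.ofReal (r ^ q⁻¹) * h (r * s)) := fun r ⟨hr0, hr1⟩ => by
    rw [← mul_assoc, ← ENNReal.ofReal_mul (by have := sub_pos.2 hr1; positivity), mul_assoc,
      ← Real.rpow_add hr0, neg_add_cancel, Real.rpow_zero, mul_one]
  have hpow : ∀ r ∈ Ioo (0:ℝ) 1, w r * (ENNReal.ofReal (r ^ q⁻¹) * h (r * s)) ^ q
      = w r * (ENNReal.ofReal r * h (r * s) ^ q) := fun r ⟨hr0, _⟩ => by
    rw [ENNReal.mul_rpow_of_nonneg _ _ hq0.le, ENNReal.ofReal_rpow_of_nonneg (by positivity) hq0.le,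
      ← Real.rpow_mul hr0.le, inv_mul_cancel₀ hq0.ne', Real.rpow_one]
  rw [setLIntegral_congr_fun measurableSet_Ioo hfactor,
    ← setLIntegral_congr_fun measurableSet_Ioo hpow]
  exact rpow_lintegral_mul_le (by fun_prop) (by fun_prop) hq

lemma lintegral_rpow_lintegral_dilation_le {a q : ℝ} (ha : 0 < a) (hq : 1 < q)
    {h : ℝ → ℝ≥0∞} (hh : Measurable h) :
    ∫⁻ s in Ioc (0:ℝ) 1, (∫⁻ r in Ioo (0:ℝ) 1, ENNReal.ofReal ((1 - r) ^ (a - 1)) * h (r * s)) ^ q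
      ≤ ENNReal.ofReal (beta a (1 - 1 / q)) ^ q * ∫⁻ u in Ioc (0:ℝ) 1, h u ^ q := by
  have hc : 0 < 1 - 1 / q := sub_pos.mpr ((div_lt_one (zero_lt_one.trans hq)).mpr hq)
  have hw_int : ∫⁻ r in Ioo (0:ℝ) 1, ENNReal.ofReal ((1 - r) ^ (a - 1) * r ^ (-q⁻¹))
      = ENNReal.ofReal (beta a (1 - 1 / q)) := by
    rw [← lintegral_one_sub_rpow_mul_rpow ha hc, show 1 - 1 / q - 1 = -q⁻¹ by ring]
  set B := ENNReal.ofReal (beta a (1 - 1 / q))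
  set N := ∫⁻ u in Ioc (0:ℝ) 1, h u ^ q
  set w : ℝ → ℝ≥0∞ := fun r => ENNReal.ofReal ((1 - r) ^ (a - 1) * r ^ (-q⁻¹))
  have hw : Measurable w := by fun_prop
  calc ∫⁻ s in Ioc (0:ℝ) 1,
        (∫⁻ r in Ioo (0:ℝ) 1, ENNReal.ofReal ((1 - r) ^ (a - 1)) * h (r * s)) ^ q
      ≤ ∫⁻ s in Ioc (0:ℝ) 1,
          B ^ (q - 1) * ∫⁻ r in Ioo (0:ℝ) 1, w r * (ENNReal.ofReal r * h (r * s) ^ q) :=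
        lintegral_mono fun s => hw_int ▸ rpow_lintegral_dilation_le a hq.le hh s
    _ = B ^ (q - 1) * ∫⁻ r in Ioo (0:ℝ) 1,
          w r * (ENNReal.ofReal r * ∫⁻ s in Ioc (0:ℝ) 1, h (r * s) ^ q) := by
        rw [lintegral_const_mul' _ _ (by finiteness), lintegral_lintegral_swap (by fun_prop)]
        congr 1
        refine lintegral_congr fun r => ?_
        rw [lintegral_const_mul _ (by fun_prop), lintegral_const_mul _ (by fun_prop)]
    _ ≤ B ^ (q - 1) * ∫⁻ r in Ioo (0:ℝ) 1, w r * N := by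
        gcongr B ^ (q - 1) * ?_
        refine setLIntegral_mono' measurableSet_Ioo fun r hr => ?_
        gcongr
        exact ofReal_mul_setLIntegral_comp_mul_le hr.1 hr.2.le _
    _ = B ^ q * N := by
        rw [lintegral_mul_const _ hw, hw_int, ← mul_assoc]
        congr 1
        conv_rhs => rw [← sub_add_cancel q 1,
          ENNReal.rpow_add_of_nonneg _ _ (sub_nonneg.2 hq.le) zero_le_one, ENNReal.rpow_one]

lemma eLpNorm_lintegral_dilation_le {a : ℝ} (ha : 0 < a) {p : ℝ≥0∞} (hp : 1 < p)
    {h : ℝ → ℝ≥0∞} (hh : Measurable h) :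
    eLpNorm (fun s => ∫⁻ r in Ioo (0:ℝ) 1, ENNReal.ofReal ((1 - r) ^ (a - 1)) * h (r * s)) p
        (volume.restrict (Ioc (0:ℝ) 1))
      ≤ ENNReal.ofReal (beta a (1 - 1 / p.toReal)) *
          eLpNorm h p (volume.restrict (Ioc (0:ℝ) 1)) := by
  rcases eq_or_ne p ⊤ with rfl | hp_top
  · simp only [ENNReal.toReal_top, div_zero, sub_zero, eLpNorm_exponent_top]
    refine essSup_le_of_ae_le _ ?_
    filter_upwards [ae_restrict_mem measurableSet_Ioc] with s hs
    exact lintegral_dilation_le_of_ae_le ha (enorm_ae_le_eLpNormEssSup h _) hs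
  · have hq : 1 < p.toReal := by
      simpa using (ENNReal.toReal_lt_toReal ENNReal.one_ne_top hp_top).mpr hp
    have hq0 : 0 < p.toReal := zero_lt_one.trans hq
    rw [eLpNorm_eq_lintegral_rpow_enorm_toReal (zero_lt_one.trans hp).ne' hp_top,
      eLpNorm_eq_lintegral_rpow_enorm_toReal (zero_lt_one.trans hp).ne' hp_top]
    simp only [enorm_eq_self]
    calc _ ≤ (ENNReal.ofReal (beta a (1 - 1 / p.toReal)) ^ p.toReal *
          ∫⁻ u in Ioc (0:ℝ) 1, h u ^ p.toReal) ^ (1 / p.toReal) :=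
          ENNReal.rpow_le_rpow (lintegral_rpow_lintegral_dilation_le ha hq hh) (by positivity)
      _ = _ := by
          rw [ENNReal.mul_rpow_of_nonneg _ _ (by positivity), ← ENNReal.rpow_mul,
            mul_one_div_cancel hq0.ne', ENNReal.rpow_one]

lemma eLpNorm_dilationMean_le {α : ℂ} (hα : 0 < α.re) {p : ℝ≥0∞} (hp : 1 < p) {g : ℝ → ℂ}
    (hg : Measurable g) :
    eLpNorm (dilationMean α g) p (volume.restrict (Ioc (0:ℝ) 1))
      ≤ ENNReal.ofReal (beta α.re (1 - 1 / p.toReal)) *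
          eLpNorm g p (volume.restrict (Ioc (0:ℝ) 1)) := by
  have hmono : eLpNorm (dilationMean α g) p (volume.restrict (Ioc (0:ℝ) 1))
      ≤ eLpNorm (fun s => ∫⁻ r in Ioo (0:ℝ) 1,
          ENNReal.ofReal ((1 - r) ^ (α.re - 1)) * ‖g (r * s)‖ₑ) p
          (volume.restrict (Ioc (0:ℝ) 1)) := by
    refine eLpNorm_mono_enorm fun s => ?_
    exact (enorm_dilationMean_le α g s).trans_eq (enorm_eq_self _).symm
  refine hmono.trans ?_
  have := eLpNorm_lintegral_dilation_le hα hp (h := fun u => ‖g u‖ₑ) hg.enorm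
  rwa [eLpNorm_enorm g] at this

end Dilation

/-- For `Re α > 0` and `1 < p ≤ ∞`, the Cesàro-Hardy operator
`C_α f(s) = (α/s^α) ∫_0^s (s-u)^{α-1} f(u) du` is bounded on `L^p[0,1]` with
`‖C_α f‖_p ≤ |α| Γ(Re α) Γ(1/p') / Γ(Re α + 1/p') ‖f‖_p`, and satisfies the
subordination formula `C_α f(s) = α ∫_0^∞ (1-e^{-t})^{α-1} (T(t)f)(s) dt`. -/
theorem stmt16 (p : ℝ≥0∞) (hp : 1 < p) (alpha : ℂ) (ha : 0 < alpha.re)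
    (f : ℝ → ℂ) (hf : MemLp f p (volume.restrict (Ioc (0:ℝ) 1))) :
    let C : ℝ → ℂ := fun s =>
      alpha / (s : ℂ) ^ alpha *
        ∫ u in Ioc (0:ℝ) s, ((s - u : ℝ) : ℂ) ^ (alpha - 1) * f u
    MemLp C p (volume.restrict (Ioc (0:ℝ) 1)) ∧
    eLpNorm C p (volume.restrict (Ioc (0:ℝ) 1)) ≤
      ENNReal.ofReal (‖alpha‖ * Real.Gamma alpha.re *
          Real.Gamma (1 - 1 / p.toReal) / Real.Gamma (alpha.re + (1 - 1 / p.toReal))) *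
        eLpNorm f p (volume.restrict (Ioc (0:ℝ) 1)) ∧
    ∀ᵐ (s : ℝ) ∂(volume.restrict (Ioc (0:ℝ) 1)),
      C s = alpha * ∫ t in Ioi (0:ℝ),
        ((1 - Real.exp (-t) : ℝ) : ℂ) ^ (alpha - 1) *
          ((Real.exp (-t) : ℂ) * f (Real.exp (-t) * s)) := by
  intro C
  obtain ⟨hf_meas, hf_fin⟩ := hf
  have hg : Measurable (hf_meas.mk f) := hf_meas.stronglyMeasurable_mk.measurable
  have hC : C =ᵐ[volume.restrict (Ioc (0:ℝ) 1)] alpha • dilationMean alpha (hf_meas.mk f) := by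
    filter_upwards [ae_restrict_mem measurableSet_Ioc] with s hs
    rw [Pi.smul_apply, smul_eq_mul, ← dilationMean_eq_of_ae_eq alpha hf_meas.ae_eq_mk hs]
    exact cesaroHardy_eq_mul_dilationMean alpha f hs.1
  have hbound : eLpNorm C p (volume.restrict (Ioc (0:ℝ) 1)) ≤ ‖alpha‖ₑ *
      ENNReal.ofReal (ProbabilityTheory.beta alpha.re (1 - 1 / p.toReal)) *
        eLpNorm f p (volume.restrict (Ioc (0:ℝ) 1)) := by
    rw [eLpNorm_congr_ae hC, eLpNorm_congr_ae hf_meas.ae_eq_mk, eLpNorm_const_smul, mul_assoc]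
    gcongr
    exact eLpNorm_dilationMean_le ha hp hg
  refine ⟨⟨((stronglyMeasurable_dilationMean alpha hg).const_smul alpha).aestronglyMeasurable.congr
    hC.symm, hbound.trans_lt (by finiteness)⟩, hbound.trans_eq ?_, ?_⟩
  · rw [← ofReal_norm, ← ENNReal.ofReal_mul (norm_nonneg _), ProbabilityTheory.beta,
      ← mul_div_assoc, ← mul_assoc]
  · filter_upwards [ae_restrict_mem measurableSet_Ioc] with s hs
    rw [show C s = _ from cesaroHardy_eq_mul_dilationMean alpha f hs.1, dilationMean,
      integral_Ioc_zero_one_eq_integral_Ioi_exp_neg]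
    congr 1
    refine setIntegral_congr_fun measurableSet_Ioi fun t _ => ?_
    rw [Complex.real_smul]
    ring
end

section
/- Let Re α > 0 and 1 ≤ p < ∞. The dual Cesàro-Hardy operator C_α^* f(s) = α ∫_s^1 (u-s)^{α-1} u^{-α} f(u) du is bounded on L^p[0,1] with ‖C_α^* f‖_p ≤ |α| Γ(Re α) Γ(1/p) / Γ(Re α + 1/p) · ‖f‖_p. -/
/-!
Write `a = Re α`. Pointwise, `|C_α^* f(s)| ≤ |α| ∫_s^1 k(s,u) |f(u)| du` with the positive kernel
`k(s,u) = (u-s)^(a-1) u^(-a)`, so it suffices to bound this kernel operator on `L^p`. This is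
Schur's test with the test function `u ↦ u^(-1/p)`, for which both test integrals are Beta
integrals: `∫_s^∞ k(s,u) u^(-1/p) du = B(1/p, a) s^(-1/p)` and
`∫_0^u k(s,u) s^(1/p-1) ds = B(1/p, a) u^(1/p-1)`. Hence the bound `B(1/p, a)`, which is
`Γ(a) Γ(1/p) / Γ(a + 1/p)`.
-/

open MeasureTheory Set ProbabilityTheory
open scoped ENNReal

/-- Hölder's inequality for `w ^ (1 - 1/q)` and `(w ^ (1 - q) * g ^ q) ^ (1/q)`, whose product
is `g`. -/
theorem ENNReal.rpow_lintegral_le_rpow_lintegral_mul_lintegral {α : Type*} [MeasurableSpace α]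
    {μ : Measure α} {g w : α → ℝ≥0∞} (hg : AEMeasurable g μ) (hw : AEMeasurable w μ)
    (hw0 : ∀ᵐ x ∂μ, w x ≠ 0) (hwtop : ∀ᵐ x ∂μ, w x ≠ ∞) {q : ℝ} (hq : 1 ≤ q) :
    (∫⁻ x, g x ∂μ) ^ q ≤ (∫⁻ x, w x ∂μ) ^ (q - 1) * ∫⁻ x, w x ^ (1 - q) * g x ^ q ∂μ := by
  have hq0 : 0 < q := zero_lt_one.trans_le hq
  set h : α → ℝ≥0∞ := fun x => w x ^ (1 - q) * g x ^ q
  have hg_eq : g =ᵐ[μ] fun x => w x ^ (1 - q⁻¹) * h x ^ q⁻¹ := by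
    filter_upwards [hw0, hwtop] with x hx0 hxtop
    rw [ENNReal.mul_rpow_of_nonneg _ _ (inv_nonneg.2 hq0.le), ← ENNReal.rpow_mul,
      ENNReal.rpow_rpow_inv hq0.ne', ← mul_assoc, ← ENNReal.rpow_add _ _ hx0 hxtop,
      show 1 - q⁻¹ + (1 - q) * q⁻¹ = 0 by field_simp; ring, ENNReal.rpow_zero, one_mul]
  have holder := ENNReal.lintegral_mul_norm_pow_le hw (hw.pow_const (1 - q) |>.mul (hg.pow_const q))
    (sub_nonneg.2 (inv_le_one_of_one_le₀ hq)) (inv_nonneg.2 hq0.le) (sub_add_cancel 1 q⁻¹)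
  calc (∫⁻ x, g x ∂μ) ^ q = (∫⁻ x, w x ^ (1 - q⁻¹) * h x ^ q⁻¹ ∂μ) ^ q := by
        rw [lintegral_congr_ae hg_eq]
    _ ≤ ((∫⁻ x, w x ∂μ) ^ (1 - q⁻¹) * (∫⁻ x, h x ∂μ) ^ q⁻¹) ^ q := by gcongr; exact holder
    _ = (∫⁻ x, w x ∂μ) ^ (q - 1) * ∫⁻ x, h x ∂μ := by
      rw [ENNReal.mul_rpow_of_nonneg _ _ hq0.le, ← ENNReal.rpow_mul, ENNReal.rpow_inv_rpow hq0.ne',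
        show (1 - q⁻¹) * q = q - 1 by field_simp]

/-- Schur's test. Using the exponent `q - 1` rather than the dual exponent keeps `q = 1` in. -/
theorem lintegral_rpow_lintegral_mul_le_of_schur {X Y : Type*}
    [MeasurableSpace X] [MeasurableSpace Y]
    {μ : Measure X} {ν : Measure Y} [SFinite μ] [SFinite ν] {K : X → Y → ℝ≥0∞}
    (hK : Measurable (Function.uncurry K)) {v : X → ℝ≥0∞} {w g : Y → ℝ≥0∞}
    (hv : AEMeasurable v μ) (hw : AEMeasurable w ν) (hg : AEMeasurable g ν)
    (hw0 : ∀ᵐ y ∂ν, w y ≠ 0) (hwtop : ∀ᵐ y ∂ν, w y ≠ ∞) {q : ℝ} (hq : 1 ≤ q) {A B : ℝ≥0∞}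
    (hA : ∀ᵐ x ∂μ, ∫⁻ y, K x y * w y ∂ν ≤ A * v x)
    (hB : ∀ᵐ y ∂ν, ∫⁻ x, K x y * v x ^ (q - 1) ∂μ ≤ B * w y ^ (q - 1)) :
    ∫⁻ x, (∫⁻ y, K x y * g y ∂ν) ^ q ∂μ ≤ A ^ (q - 1) * B * ∫⁻ y, g y ^ q ∂ν := by
  have hq1 : 0 ≤ q - 1 := sub_nonneg.2 hq
  have hKx (x : X) : Measurable (K x) := hK.comp measurable_prodMk_left
  have hKy (y : Y) : Measurable (K · y) := hK.comp measurable_prodMk_right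
  set H : Y → ℝ≥0∞ := fun y => w y ^ (1 - q) * g y ^ q
  have hH : AEMeasurable H ν := (hw.pow_const _).mul (hg.pow_const _)
  have holder (x : X) : (∫⁻ y, K x y * g y ∂ν) ^ q ≤
      (∫⁻ y, K x y * w y ∂ν) ^ (q - 1) * ∫⁻ y, K x y * H y ∂ν := by
    have hac := withDensity_absolutelyContinuous ν (K x)
    have := ENNReal.rpow_lintegral_le_rpow_lintegral_mul_lintegral (hg.mono_ac hac) (hw.mono_ac hac)
      (hac.ae_le hw0) (hac.ae_le hwtop) hq
    rwa [lintegral_withDensity_eq_lintegral_mul₀ (hKx x).aemeasurable hg,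
      lintegral_withDensity_eq_lintegral_mul₀ (hKx x).aemeasurable hw,
      lintegral_withDensity_eq_lintegral_mul₀ (hKx x).aemeasurable hH] at this
  have hwH : ∀ᵐ y ∂ν, H y * w y ^ (q - 1) = g y ^ q := by
    filter_upwards [hw0, hwtop] with y hy0 hytop
    rw [mul_right_comm, ← ENNReal.rpow_add _ _ hy0 hytop, sub_add_sub_cancel', sub_self,
      ENNReal.rpow_zero, one_mul]
  have hF : AEMeasurable (fun z : X × Y => v z.1 ^ (q - 1) * (K z.1 z.2 * H z.2))
      (μ.prod ν) :=
    ((hv.comp_quasiMeasurePreserving Measure.quasiMeasurePreserving_fst).pow_const _).mul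
      (hK.aemeasurable.mul (hH.comp_quasiMeasurePreserving Measure.quasiMeasurePreserving_snd))
  calc ∫⁻ x, (∫⁻ y, K x y * g y ∂ν) ^ q ∂μ
      ≤ ∫⁻ x, (A * v x) ^ (q - 1) * ∫⁻ y, K x y * H y ∂ν ∂μ := by
        refine lintegral_mono_ae ?_
        filter_upwards [hA] with x hx
        exact (holder x).trans (by gcongr)
    _ = A ^ (q - 1) * ∫⁻ x, ∫⁻ y, v x ^ (q - 1) * (K x y * H y) ∂ν ∂μ := by
        rw [← lintegral_const_mul'' _ hF.lintegral_prod_right']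
        refine lintegral_congr fun x => ?_
        dsimp only
        rw [ENNReal.mul_rpow_of_nonneg _ _ hq1, mul_assoc,
          lintegral_const_mul'' _ (show AEMeasurable (fun y => K x y * H y) ν from
            (hKx x).aemeasurable.mul hH)]
    _ = A ^ (q - 1) * ∫⁻ y, H y * ∫⁻ x, K x y * v x ^ (q - 1) ∂μ ∂ν := by
        rw [lintegral_lintegral_swap hF]
        congr 1
        refine lintegral_congr fun y => ?_
        rw [← lintegral_const_mul'' _ (show AEMeasurable (fun x => K x y * v x ^ (q - 1)) μ from
          (hKy y).aemeasurable.mul (hv.pow_const _))]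
        congr 1; ext x; ring
    _ ≤ A ^ (q - 1) * ∫⁻ y, H y * (B * w y ^ (q - 1)) ∂ν := by
        gcongr 1
        refine lintegral_mono_ae ?_
        filter_upwards [hB] with y hy
        gcongr
    _ = A ^ (q - 1) * B * ∫⁻ y, g y ^ q ∂ν := by
        rw [mul_assoc, ← lintegral_const_mul'' _ (hg.pow_const q)]
        refine congrArg _ (lintegral_congr_ae ?_)
        filter_upwards [hwH] with y hy
        rw [← hy]; ring

theorem lintegral_rpow_mul_one_sub_rpow {α β : ℝ} (hα : 0 < α) (hβ : 0 < β) :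
    ∫⁻ x in Ioo 0 1, ENNReal.ofReal (x ^ (α - 1) * (1 - x) ^ (β - 1)) =
      ENNReal.ofReal (beta α β) := by
  have h := lintegral_betaPDF_eq_one hα hβ
  simp_rw [lintegral_betaPDF, mul_assoc,
    ENNReal.ofReal_mul (one_div_pos.2 (beta_pos hα hβ)).le] at h
  rw [lintegral_const_mul' _ _ ENNReal.ofReal_ne_top] at h
  rw [ENNReal.eq_inv_of_mul_eq_one_left ((mul_comm _ _).trans h),
    ← ENNReal.ofReal_inv_of_pos (one_div_pos.2 (beta_pos hα hβ)), one_div, inv_inv]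

theorem lintegral_Ioo_rpow_mul_sub_rpow {α β u : ℝ} (hα : 0 < α) (hβ : 0 < β) (hu : 0 < u) :
    ∫⁻ s in Ioo 0 u, ENNReal.ofReal (s ^ (α - 1) * (u - s) ^ (β - 1)) =
      ENNReal.ofReal (u ^ (α + β - 1)) * ENNReal.ofReal (beta α β) := by
  have himg : (u * ·) '' Ioo 0 1 = Ioo 0 u := by simp [image_mul_left_Ioo hu]
  have hderiv (t : ℝ) : HasDerivWithinAt (u * ·) u (Ioo 0 1) t := by
    simpa using ((hasDerivAt_id t).const_mul u).hasDerivWithinAt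
  rw [← himg, lintegral_image_eq_lintegral_abs_deriv_mul measurableSet_Ioo (fun t _ => hderiv t)
      (mul_right_injective₀ hu.ne').injOn, ← lintegral_rpow_mul_one_sub_rpow hα hβ,
    ← lintegral_const_mul' _ _ ENNReal.ofReal_ne_top]
  refine setLIntegral_congr_fun measurableSet_Ioo fun t ⟨ht0, ht1⟩ => ?_
  have h1t : 0 < 1 - t := by linarith
  rw [← ENNReal.ofReal_mul (abs_nonneg _), ← ENNReal.ofReal_mul (by positivity)]
  congr 1
  rw [show u - u * t = u * (1 - t) by ring, abs_of_pos hu, Real.mul_rpow hu.le ht0.le,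
    Real.mul_rpow hu.le h1t.le, show α + β - 1 = (α - 1) + (β - 1) + 1 by ring,
    Real.rpow_add hu, Real.rpow_add hu, Real.rpow_one]
  ring

theorem lintegral_Ioi_rpow_sub_mul_rpow {α β s : ℝ} (hα : 0 < α) (hβ : 0 < β) (hs : 0 < s) :
    ∫⁻ u in Ioi s, ENNReal.ofReal ((u - s) ^ (β - 1) * u ^ (-(α + β))) =
      ENNReal.ofReal (s ^ (-α)) * ENNReal.ofReal (beta α β) := by
  have himg : (s / ·) '' Ioo 0 1 = Ioi s := by
    ext x
    constructor
    · rintro ⟨t, ⟨ht0, ht1⟩, rfl⟩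
      exact (lt_div_iff₀ ht0).2 (by nlinarith)
    · intro hx
      have hx0 : 0 < x := hs.trans hx
      exact ⟨s / x, ⟨by positivity, (div_lt_one hx0).2 hx⟩, div_div_cancel₀ hs.ne'⟩
  have hderiv (t : ℝ) (ht : t ∈ Ioo 0 1) :
      HasDerivWithinAt (s / ·) (-(s / t ^ 2)) (Ioo 0 1) t := by
    simpa [div_eq_mul_inv] using ((hasDerivAt_inv ht.1.ne').const_mul s).hasDerivWithinAt
  have hinj : InjOn (s / ·) (Ioo (0 : ℝ) 1) := fun x _ y _ h =>
    inv_injective ((mul_right_injective₀ hs.ne') h)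
  rw [← himg, lintegral_image_eq_lintegral_abs_deriv_mul measurableSet_Ioo hderiv hinj,
    ← lintegral_rpow_mul_one_sub_rpow hα hβ, ← lintegral_const_mul' _ _ ENNReal.ofReal_ne_top]
  refine setLIntegral_congr_fun measurableSet_Ioo fun t ⟨ht0, ht1⟩ => ?_
  have h1t : 0 < 1 - t := by linarith
  rw [← ENNReal.ofReal_mul (abs_nonneg _), ← ENNReal.ofReal_mul (by positivity)]
  congr 1
  rw [show s / t - s = s * (1 - t) / t by field_simp, abs_neg, abs_of_pos (by positivity),
    Real.div_rpow (by positivity) ht0.le, Real.mul_rpow hs.le h1t.le, Real.div_rpow hs.le ht0.le]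
  simp only [Real.rpow_sub_one hs.ne', Real.rpow_sub_one ht0.ne', Real.rpow_neg hs.le,
    Real.rpow_neg ht0.le, Real.rpow_add hs, Real.rpow_add ht0]
  field_simp

noncomputable def dualCesaroKernel (a s u : ℝ) : ℝ≥0∞ :=
  if s < u then ENNReal.ofReal ((u - s) ^ (a - 1) * u ^ (-a)) else 0

theorem measurable_dualCesaroKernel (a : ℝ) : Measurable (Function.uncurry (dualCesaroKernel a)) :=
  Measurable.ite (measurableSet_lt measurable_fst measurable_snd) (by fun_prop) measurable_const

theorem setLIntegral_dualCesaroKernel_mul_rpow_neg_le {a c s : ℝ} (ha : 0 < a) (hc : 0 < c)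
    (hs : 0 < s) :
    ∫⁻ u in Ioc 0 1, dualCesaroKernel a s u * ENNReal.ofReal (u ^ (-c)) ≤
      ENNReal.ofReal (beta c a) * ENNReal.ofReal (s ^ (-c)) := by
  calc ∫⁻ u in Ioc 0 1, dualCesaroKernel a s u * ENNReal.ofReal (u ^ (-c))
      ≤ ∫⁻ u, dualCesaroKernel a s u * ENNReal.ofReal (u ^ (-c)) := setLIntegral_le_lintegral _ _
    _ = ∫⁻ u in Ioi s, ENNReal.ofReal ((u - s) ^ (a - 1) * u ^ (-(c + a))) := by
      rw [← lintegral_indicator measurableSet_Ioi]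
      refine lintegral_congr fun u => ?_
      by_cases hu : s < u
      · have hu0 : 0 < u := hs.trans hu
        rw [dualCesaroKernel, if_pos hu, indicator_of_mem (mem_Ioi.2 hu),
          ← ENNReal.ofReal_mul (by positivity), mul_assoc, ← Real.rpow_add hu0, neg_add_rev]
      · rw [dualCesaroKernel, if_neg hu, indicator_of_notMem (notMem_Ioi.2 (not_lt.1 hu)),
          zero_mul]
    _ = _ := by rw [lintegral_Ioi_rpow_sub_mul_rpow hc ha hs, mul_comm]

theorem setLIntegral_dualCesaroKernel_mul_rpow_sub_one_le {a c u : ℝ} (ha : 0 < a) (hc : 0 < c)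
    (hu : 0 < u) :
    ∫⁻ s in Ioc 0 1, dualCesaroKernel a s u * ENNReal.ofReal (s ^ (c - 1)) ≤
      ENNReal.ofReal (beta c a) * ENNReal.ofReal (u ^ (c - 1)) := by
  calc ∫⁻ s in Ioc 0 1, dualCesaroKernel a s u * ENNReal.ofReal (s ^ (c - 1))
      ≤ ∫⁻ s in Ioi 0, dualCesaroKernel a s u * ENNReal.ofReal (s ^ (c - 1)) :=
        lintegral_mono_set Ioc_subset_Ioi_self
    _ = ∫⁻ s in Ioo 0 u, ENNReal.ofReal (u ^ (-a)) *
          ENNReal.ofReal (s ^ (c - 1) * (u - s) ^ (a - 1)) := by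
      rw [← Iio_inter_Ioi, ← setLIntegral_indicator measurableSet_Iio]
      refine setLIntegral_congr_fun measurableSet_Ioi fun s (hs : 0 < s) => ?_
      by_cases hsu : s < u
      · rw [dualCesaroKernel, if_pos hsu, indicator_of_mem (mem_Iio.2 hsu),
          ← ENNReal.ofReal_mul (by have := sub_pos.2 hsu; positivity),
          ← ENNReal.ofReal_mul (by positivity)]
        congr 1
        ring
      · rw [dualCesaroKernel, if_neg hsu, indicator_of_notMem (notMem_Iio.2 (not_lt.1 hsu)),
          zero_mul]
    _ = ENNReal.ofReal (beta c a) * ENNReal.ofReal (u ^ (c - 1)) := by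
      rw [lintegral_const_mul' _ _ ENNReal.ofReal_ne_top, lintegral_Ioo_rpow_mul_sub_rpow hc ha hu,
        ← mul_assoc, ← ENNReal.ofReal_mul (by positivity), ← Real.rpow_add hu, mul_comm,
        show -a + (c + a - 1) = c - 1 by ring]

theorem lintegral_rpow_lintegral_dualCesaroKernel_le {a q : ℝ} (ha : 0 < a) (hq : 1 ≤ q)
    {g : ℝ → ℝ≥0∞} (hg : AEMeasurable g (volume.restrict (Ioc 0 1))) :
    ∫⁻ s in Ioc 0 1, (∫⁻ u in Ioc 0 1, dualCesaroKernel a s u * g u) ^ q ≤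
      ENNReal.ofReal (beta q⁻¹ a) ^ q * ∫⁻ u in Ioc 0 1, g u ^ q := by
  have hc : 0 < q⁻¹ := inv_pos.2 (one_pos.trans_le hq)
  set W : ℝ → ℝ≥0∞ := fun u => ENNReal.ofReal (u ^ (-q⁻¹))
  have hW : AEMeasurable W (volume.restrict (Ioc 0 1)) :=
    (measurable_id.pow_const _).ennreal_ofReal.aemeasurable
  have hW0 : ∀ᵐ u ∂volume.restrict (Ioc 0 1), W u ≠ 0 := by
    filter_upwards [ae_restrict_mem measurableSet_Ioc] with u hu
    exact (ENNReal.ofReal_pos.2 (Real.rpow_pos_of_pos hu.1 _)).ne'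
  have hWpow {u : ℝ} (hu : 0 < u) : W u ^ (q - 1) = ENNReal.ofReal (u ^ (q⁻¹ - 1)) := by
    rw [ENNReal.ofReal_rpow_of_nonneg (by positivity) (by linarith), ← Real.rpow_mul hu.le]
    congr 2
    field_simp
    ring
  have hA : ∀ᵐ s ∂volume.restrict (Ioc 0 1), ∫⁻ u in Ioc 0 1, dualCesaroKernel a s u * W u ≤
      ENNReal.ofReal (beta q⁻¹ a) * W s := by
    filter_upwards [ae_restrict_mem measurableSet_Ioc] with s hs
    exact setLIntegral_dualCesaroKernel_mul_rpow_neg_le ha hc hs.1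
  have hB : ∀ᵐ u ∂volume.restrict (Ioc 0 1),
      ∫⁻ s in Ioc 0 1, dualCesaroKernel a s u * W s ^ (q - 1) ≤
        ENNReal.ofReal (beta q⁻¹ a) * W u ^ (q - 1) := by
    filter_upwards [ae_restrict_mem measurableSet_Ioc] with u hu
    rw [hWpow hu.1, setLIntegral_congr_fun measurableSet_Ioc fun s hs => by rw [hWpow hs.1]]
    exact setLIntegral_dualCesaroKernel_mul_rpow_sub_one_le ha hc hu.1
  calc _ ≤ ENNReal.ofReal (beta q⁻¹ a) ^ (q - 1) * ENNReal.ofReal (beta q⁻¹ a) *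
        ∫⁻ u in Ioc 0 1, g u ^ q :=
      lintegral_rpow_lintegral_mul_le_of_schur (measurable_dualCesaroKernel a) hW hW hg hW0
        (ae_of_all _ fun _ => ENNReal.ofReal_ne_top) hq hA hB
    _ = _ := by
      have h := ENNReal.rpow_add_of_nonneg (x := ENNReal.ofReal (beta q⁻¹ a)) _ _ (sub_nonneg.2 hq)
        zero_le_one
      rw [sub_add_cancel, ENNReal.rpow_one] at h
      rw [h]

theorem eLpNorm_lintegral_dualCesaroKernel_le {a : ℝ} (ha : 0 < a) {p : ℝ≥0∞} (hp : 1 ≤ p)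
    (hp' : p ≠ ∞) {g : ℝ → ℝ≥0∞} (hg : AEMeasurable g (volume.restrict (Ioc 0 1))) :
    eLpNorm (fun s => ∫⁻ u in Ioc 0 1, dualCesaroKernel a s u * g u) p
        (volume.restrict (Ioc 0 1)) ≤
      ENNReal.ofReal (beta p.toReal⁻¹ a) * eLpNorm g p (volume.restrict (Ioc 0 1)) := by
  have hq : 1 ≤ p.toReal := by simpa using ENNReal.toReal_mono hp' hp
  have hq0 : 0 < p.toReal := one_pos.trans_le hq
  simp only [eLpNorm_eq_lintegral_rpow_enorm_toReal (one_pos.trans_le hp).ne' hp', enorm_eq_self]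
  calc
    _ ≤ (ENNReal.ofReal (beta p.toReal⁻¹ a) ^ p.toReal *
        ∫⁻ u in Ioc 0 1, g u ^ p.toReal) ^ (1 / p.toReal) := by
      gcongr
      exact lintegral_rpow_lintegral_dualCesaroKernel_le ha hq hg
    _ = _ := by
      rw [ENNReal.mul_rpow_of_nonneg _ _ (by positivity), ← ENNReal.rpow_mul,
        mul_one_div_cancel hq0.ne', ENNReal.rpow_one]

noncomputable def dualCesaroHardy (α : ℂ) (f : ℝ → ℂ) (s : ℝ) : ℂ :=
  α * ∫ u in Ioc s 1, ((u - s : ℝ) : ℂ) ^ (α - 1) / (u : ℂ) ^ α * f u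

theorem enorm_dualCesaroHardy_le (α : ℂ) (f : ℝ → ℂ) {s : ℝ} (hs : 0 ≤ s) :
    ‖dualCesaroHardy α f s‖ₑ ≤
      ‖α‖₊ * ∫⁻ u in Ioc 0 1, dualCesaroKernel α.re s u * ‖f u‖ₑ := by
  rw [dualCesaroHardy, enorm_mul, enorm_eq_nnnorm]
  gcongr
  calc _ ≤ ∫⁻ u in Ioc s 1, ‖((u - s : ℝ) : ℂ) ^ (α - 1) / (u : ℂ) ^ α * f u‖ₑ :=
        enorm_integral_le_lintegral_enorm _
    _ = ∫⁻ u in Ioc s 1, dualCesaroKernel α.re s u * ‖f u‖ₑ := by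
      refine setLIntegral_congr_fun measurableSet_Ioc fun u ⟨hsu, _⟩ => ?_
      have hu : 0 < u := hs.trans_lt hsu
      rw [dualCesaroKernel, if_pos hsu, enorm_mul, ← ofReal_norm, norm_div,
        Complex.norm_cpow_eq_rpow_re_of_pos (sub_pos.2 hsu), Complex.norm_cpow_eq_rpow_re_of_pos hu,
        Complex.sub_re, Complex.one_re, Real.rpow_neg hu.le, div_eq_mul_inv]
    _ ≤ _ := lintegral_mono_set (Ioc_subset_Ioc_left hs)

theorem aestronglyMeasurable_dualCesaroHardy (α : ℂ) {f : ℝ → ℂ}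
    (hf : AEStronglyMeasurable f (volume.restrict (Ioc 0 1))) :
    AEStronglyMeasurable (dualCesaroHardy α f) (volume.restrict (Ioc 0 1)) := by
  set F : ℝ × ℝ → ℂ := {z | z.1 < z.2}.indicator fun z =>
    ((z.2 - z.1 : ℝ) : ℂ) ^ (α - 1) / (z.2 : ℂ) ^ α * f z.2
  have hF : AEStronglyMeasurable F ((volume.restrict (Ioc 0 1)).prod (volume.restrict (Ioc 0 1))) :=
    ((Measurable.aestronglyMeasurable (by fun_prop)).mul hf.comp_snd).indicator
      (measurableSet_lt measurable_fst measurable_snd)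
  refine (hF.integral_prod_right'.const_mul α).congr ?_
  filter_upwards [ae_restrict_mem measurableSet_Ioc] with s hs
  have hIoc : Ioc s 1 = Ioc 0 1 ∩ Ioi s := by rw [Ioc_inter_Ioi, max_eq_right hs.1.le]
  rw [dualCesaroHardy, hIoc, ← setIntegral_indicator measurableSet_Ioi]
  rfl

/-- For `Re α > 0` and `1 ≤ p < ∞`, the dual Cesàro-Hardy operator
`C_α^* f(s) = α ∫_s^1 (u-s)^{α-1} u^{-α} f(u) du` is bounded on `L^p[0,1]` with
`‖C_α^* f‖_p ≤ |α| Γ(Re α) Γ(1/p) / Γ(Re α + 1/p) ‖f‖_p`. -/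
theorem stmt17 (p : ℝ≥0∞) (hp : 1 ≤ p) (hp' : p ≠ ∞) (alpha : ℂ) (ha : 0 < alpha.re)
    (f : ℝ → ℂ) (hf : MemLp f p (volume.restrict (Ioc (0:ℝ) 1))) :
    let C : ℝ → ℂ := fun s =>
      alpha * ∫ u in Ioc s 1, ((u - s : ℝ) : ℂ) ^ (alpha - 1) / (u : ℂ) ^ alpha * f u
    MemLp C p (volume.restrict (Ioc (0:ℝ) 1)) ∧
    eLpNorm C p (volume.restrict (Ioc (0:ℝ) 1)) ≤
      ENNReal.ofReal (‖alpha‖ * Real.Gamma alpha.re *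
          Real.Gamma (1 / p.toReal) / Real.Gamma (alpha.re + 1 / p.toReal)) *
        eLpNorm f p (volume.restrict (Ioc (0:ℝ) 1)) := by
  change MemLp (dualCesaroHardy alpha f) _ _ ∧ eLpNorm (dualCesaroHardy alpha f) _ _ ≤ _
  have hbound : eLpNorm (dualCesaroHardy alpha f) p (volume.restrict (Ioc 0 1)) ≤
      ‖alpha‖₊ * (ENNReal.ofReal (beta p.toReal⁻¹ alpha.re) *
        eLpNorm f p (volume.restrict (Ioc 0 1))) := by
    refine (eLpNorm_le_nnreal_smul_eLpNorm_of_ae_le_mul'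
      (g := fun s => ∫⁻ u in Ioc 0 1, dualCesaroKernel alpha.re s u * ‖f u‖ₑ)
      (c := ‖alpha‖₊) ?_ p).trans ?_
    · filter_upwards [ae_restrict_mem measurableSet_Ioc] with s hs
      exact enorm_dualCesaroHardy_le alpha f hs.1.le
    · rw [ENNReal.smul_def, smul_eq_mul, ← eLpNorm_enorm f]
      gcongr
      exact eLpNorm_lintegral_dualCesaroKernel_le ha hp hp' hf.1.enorm
  refine ⟨⟨aestronglyMeasurable_dualCesaroHardy alpha hf.1, hbound.trans_lt ?_⟩,
    hbound.trans_eq ?_⟩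
  · exact ENNReal.mul_lt_top ENNReal.coe_lt_top (ENNReal.mul_lt_top ENNReal.ofReal_lt_top hf.2)
  · rw [← mul_assoc, ← enorm_eq_nnnorm, ← ofReal_norm, ← ENNReal.ofReal_mul (norm_nonneg _), beta,
      one_div, add_comm alpha.re]
    congr 2
    ring
end

section
/- For t > 0, λ ∈ ℂ with Re λ < -1/2, and m ∈ ℕ, the function g_λ(s) log^m(s) lies in L^2[0,1] and T(t)(g_λ log^m) = e^{λt} g_λ · Σ_{j=0}^m binom(m,j) (-t)^{m-j} log^j; consequently (e^{λt} - T(t))^{m+1} annihilates g_λ log^m, i.e., g_λ log^m belongs to the (m+1)-st generalized eigenspace of T(t) for the eigenvalue e^{λt}. -/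
/-!
On functions of the form `s ^ (-(λ + 1)) * φ (log s)`, the operator `T(t)` acts as `e^{λt}` times
the shift `φ ↦ φ (· - t)`. Hence `e^{λt} - T(t)` acts as `-e^{λt}` times the finite difference
with step `-t` in the variable `log s`, and `m + 1` such differences annihilate the polynomial
`y ↦ y ^ m`. Square integrability follows from `|log s| ≤ s^{-ε} / ε` on `(0, 1]`, which turns
`|s^{-(λ+1)} log^m s|²` into a power of `s` with exponent `> -1`.
-/

open MeasureTheory Set Polynomial

theorem Polynomial.fwdDiff_iter_eval_eq_zero_of_natDegree_lt {R : Type*} [CommRing R] (h : R)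
    {P : R[X]} {n : ℕ} (hP : P.natDegree < n) : (fwdDiff h)^[n] P.eval = 0 := by
  ext y
  -- substituting `y + h X` reduces this to the step-`1` case at `0`
  set Q := P.comp (C y + C h * X)
  have hQ : Q.natDegree < n := by
    refine lt_of_le_of_lt ?_ hP
    calc Q.natDegree ≤ P.natDegree * (C y + C h * X).natDegree := natDegree_comp_le
      _ ≤ P.natDegree * 1 := by gcongr; compute_degree
      _ = P.natDegree := mul_one _
  have := congrFun (Q.fwdDiff_iter_eq_zero_of_degree_lt hQ) 0
  rw [fwdDiff_iter_eq_sum_shift] at this ⊢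
  simp only [Q, eval_comp, eval_add, eval_C, eval_mul, eval_X, zero_add, nsmul_eq_mul, mul_one,
    Pi.zero_apply] at this ⊢
  simpa only [mul_comm] using this

theorem integrableOn_rpow_mul_abs_log_pow {a : ℝ} (ha : -1 < a) (k : ℕ) :
    IntegrableOn (fun s : ℝ => s ^ a * |Real.log s| ^ k) (Ioc 0 1) := by
  obtain ⟨ε, hε, hkε⟩ : ∃ ε : ℝ, 0 < ε ∧ k * ε < a + 1 := by
    refine ⟨(a + 1) / (k + 1), div_pos (by linarith) (by positivity), ?_⟩
    rw [mul_div_assoc', div_lt_iff₀ (by positivity)]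
    nlinarith
  have hdom : IntegrableOn (fun s : ℝ => (1 / ε) ^ k * s ^ (a - k * ε)) (Ioc 0 1) :=
    (intervalIntegral.intervalIntegrable_rpow' (by linarith)).1.const_mul _
  refine hdom.mono' (by fun_prop) ?_
  filter_upwards [ae_restrict_mem measurableSet_Ioc] with s ⟨hs0, hs1⟩
  have hsplit : s ^ a * |Real.log s| ^ k = s ^ (a - k * ε) * |Real.log s * s ^ ε| ^ k := by
    rw [abs_mul, abs_of_pos (Real.rpow_pos_of_pos hs0 _), mul_pow, ← Real.rpow_mul_natCast hs0.le,
      mul_left_comm, ← Real.rpow_add hs0, show a - k * ε + ε * k = a by ring, mul_comm]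
  rw [Real.norm_of_nonneg (by positivity), hsplit, mul_comm]
  gcongr
  exact (Real.abs_log_mul_self_rpow_lt s ε hs0 hs1 hε).le

theorem memLp_two_cpow_mul_log_pow {w : ℂ} (hw : -(1 / 2) < w.re) (m : ℕ) :
    MemLp (fun s : ℝ => (s : ℂ) ^ w * (Real.log s : ℂ) ^ m) 2 (volume.restrict (Ioc 0 1)) := by
  rw [memLp_two_iff_integrable_sq_norm (by fun_prop)]
  refine (integrableOn_rpow_mul_abs_log_pow (a := 2 * w.re) (by linarith) (2 * m)).congr_fun
    (fun s hs => ?_) measurableSet_Ioc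
  simp only [norm_mul, norm_pow, Complex.norm_cpow_eq_rpow_re_of_pos hs.1, Complex.norm_real,
    Real.norm_eq_abs, mul_pow, ← pow_mul, ← Real.rpow_mul_natCast hs.1.le]
  ring_nf

noncomputable def dilation (t : ℝ) (h : ℝ → ℂ) : ℝ → ℂ :=
  fun x => (Real.exp (-t) : ℂ) * h (Real.exp (-t) * x)

theorem ofReal_exp_neg_mul_cpow (t : ℝ) (lam : ℂ) {s : ℝ} (hs : 0 < s) :
    (Real.exp (-t) : ℂ) * ((Real.exp (-t) * s : ℝ) : ℂ) ^ (-(lam + 1)) =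
      Complex.exp (lam * t) * (s : ℂ) ^ (-(lam + 1)) := by
  rw [Complex.ofReal_mul, Complex.mul_cpow_ofReal_nonneg (Real.exp_pos _).le hs.le,
    Complex.cpow_def_of_ne_zero (Complex.ofReal_ne_zero.mpr (Real.exp_ne_zero _)),
    ← Complex.ofReal_log (Real.exp_pos _).le, Real.log_exp, ← mul_assoc, Complex.ofReal_exp,
    ← Complex.exp_add]
  push_cast
  ring_nf

theorem dilation_apply_of_eq_cpow_mul_comp_log {t : ℝ} {lam : ℂ} {φ : ℂ → ℂ} {f : ℝ → ℂ}
    (hf : ∀ x, 0 < x → f x = (x : ℂ) ^ (-(lam + 1)) * φ (Real.log x)) {s : ℝ} (hs : 0 < s) :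
    dilation t f s = Complex.exp (lam * t) * (s : ℂ) ^ (-(lam + 1)) * φ (Real.log s - t) := by
  rw [dilation, hf _ (by positivity), ← mul_assoc, ofReal_exp_neg_mul_cpow t lam hs,
    Real.log_mul (Real.exp_ne_zero _) hs.ne', Real.log_exp]
  push_cast
  ring_nf

theorem iterate_sub_dilation_cpow_mul_comp_log (t : ℝ) (lam : ℂ) (φ : ℂ → ℂ) (n : ℕ) {s : ℝ}
    (hs : 0 < s) :
    (fun h x => Complex.exp (lam * t) * h x - dilation t h x)^[n]
        (fun x => (x : ℂ) ^ (-(lam + 1)) * φ (Real.log x)) s =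
      (s : ℂ) ^ (-(lam + 1)) *
        ((-Complex.exp (lam * t)) ^ n * ((fwdDiff (-t : ℂ))^[n] φ) (Real.log s)) := by
  induction n generalizing s with
  | zero => simp
  | succ n ih =>
    rw [Function.iterate_succ_apply', dilation_apply_of_eq_cpow_mul_comp_log
      (φ := fun y => (-Complex.exp (lam * t)) ^ n * ((fwdDiff (-t : ℂ))^[n] φ) y)
      (fun x hx => ih hx) hs, ih hs, Function.iterate_succ_apply', fwdDiff,
      sub_eq_add_neg (Real.log s : ℂ)]
    ring

theorem stmt18_general (t : ℝ) (lam : ℂ) (hl : lam.re < -(1/2)) (m : ℕ) :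
    let g : ℝ → ℂ := fun s => (s : ℂ) ^ (-(lam + 1)) * (Real.log s : ℂ) ^ m
    MemLp g 2 (volume.restrict (Ioc (0:ℝ) 1)) ∧
    (∀ s ∈ Ioc (0:ℝ) 1,
      (Real.exp (-t) : ℂ) * g (Real.exp (-t) * s) =
        Complex.exp (lam * t) * (s : ℂ) ^ (-(lam + 1)) *
          ∑ j ∈ Finset.range (m + 1),
            (m.choose j : ℂ) * (-(t : ℂ)) ^ (m - j) * (Real.log s : ℂ) ^ j) ∧
    (∀ s ∈ Ioc (0:ℝ) 1,
      ((fun h : ℝ → ℂ => fun x =>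
          Complex.exp (lam * t) * h x - (Real.exp (-t) : ℂ) * h (Real.exp (-t) * x))^[m + 1]
        g) s = 0) := by
  intro g
  have hw : -(1 / 2) < (-(lam + 1)).re := by
    simp only [Complex.neg_re, Complex.add_re, Complex.one_re]
    linarith
  refine ⟨memLp_two_cpow_mul_log_pow hw m, fun s hs => ?_, fun s hs => ?_⟩
  · rw [← dilation, dilation_apply_of_eq_cpow_mul_comp_log (φ := (· ^ m)) (fun _ _ => rfl)
      hs.1, sub_eq_add_neg, add_pow]
    exact congrArg _ (Finset.sum_congr rfl fun j _ => by ring)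
  · have hΔ := Polynomial.fwdDiff_iter_eval_eq_zero_of_natDegree_lt (-t : ℂ)
      (P := X ^ m) (n := m + 1) (by simp)
    simp only [eval_pow, eval_X] at hΔ
    exact (iterate_sub_dilation_cpow_mul_comp_log t lam (· ^ m) (m + 1) hs.1).trans
      (by rw [hΔ, Pi.zero_apply, mul_zero, mul_zero])

/-- For `t > 0`, `Re λ < -1/2` and `m ∈ ℕ`, the function `g_λ(s) log^m(s)` lies in
`L^2[0,1]`, satisfies
`T(t)(g_λ log^m) = e^{λt} g_λ Σ_{j=0}^m binom(m,j) (-t)^{m-j} log^j`, and is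
annihilated by `(e^{λt} - T(t))^{m+1}`, i.e. it is in the `(m+1)`-st generalized
eigenspace of `T(t)` for the eigenvalue `e^{λt}`. -/
theorem stmt18 (t : ℝ) (ht : 0 < t) (lam : ℂ) (hl : lam.re < -(1/2)) (m : ℕ) :
    let g : ℝ → ℂ := fun s => (s : ℂ) ^ (-(lam + 1)) * (Real.log s : ℂ) ^ m
    MemLp g 2 (volume.restrict (Ioc (0:ℝ) 1)) ∧
    (∀ s ∈ Ioc (0:ℝ) 1,
      (Real.exp (-t) : ℂ) * g (Real.exp (-t) * s) =
        Complex.exp (lam * t) * (s : ℂ) ^ (-(lam + 1)) *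
          ∑ j ∈ Finset.range (m + 1),
            (m.choose j : ℂ) * (-(t : ℂ)) ^ (m - j) * (Real.log s : ℂ) ^ j) ∧
    (∀ s ∈ Ioc (0:ℝ) 1,
      ((fun h : ℝ → ℂ => fun x =>
          Complex.exp (lam * t) * h x - (Real.exp (-t) : ℂ) * h (Real.exp (-t) * x))^[m + 1]
        g) s = 0) :=
  stmt18_general t lam hl m
end
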